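/- arXiv:2212.11254 — 13 statements merged into one kernel-verified Lean document; each statement's English description precedes it below -/
import Mathlib

section
/- Let U, X, Y be nonempty finite types, let p be a pmf on U × X × Y with p(u,x) > 0 for all u and x, let r : U → ℝ be nonnegative with ∑_u r(u)·p(u) = 1, and let q be the latent shift of p by r, i.e. q(u,x,y) = r(u)·p(u,x,y). Then for every x with q(x) > 0 and every y, q(y|x) = (∑_u p(y|x,u) · p(u|x) · r(u)) · (p(x)/q(x)), where p(y|x,u) = p(u,x,y)/p(u,x), p(u|x) = p(u,x)/p(x), and q(y|x) = q(x,y)/q(x). -/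
/-- **Subgroup adjustment formula** (paper's equation (1)).
If `q` is the latent shift of `p` by `r`, then for every `x` with `q(x) > 0` and every `y`,
`q(y|x) = (∑ u, p(y|x,u) · p(u|x) · r(u)) · (p(x)/q(x))`. -/
theorem stmt_0 {U X Y : Type*} [Fintype U] [Fintype X] [Fintype Y]
    [Nonempty U] [Nonempty X] [Nonempty Y]
    (p : U × X × Y → ℝ)
    (hp0 : ∀ t, 0 ≤ p t) (hp1 : ∑ t, p t = 1)
    (hpux : ∀ u x, 0 < ∑ y, p (u, x, y))
    (r : U → ℝ) (hr0 : ∀ u, 0 ≤ r u)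
    (hr1 : ∑ u, r u * (∑ x, ∑ y, p (u, x, y)) = 1)
    (q : U × X × Y → ℝ)
    (hq : ∀ u x y, q (u, x, y) = r u * p (u, x, y)) :
    ∀ x, 0 < (∑ u, ∑ y, q (u, x, y)) → ∀ y,
      (∑ u, q (u, x, y)) / (∑ u, ∑ y', q (u, x, y')) =
        (∑ u, (p (u, x, y) / ∑ y', p (u, x, y')) *
              ((∑ y', p (u, x, y')) / (∑ u', ∑ y', p (u', x, y'))) * r u) *
          ((∑ u', ∑ y', p (u', x, y')) / (∑ u, ∑ y', q (u, x, y'))) := by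
  intro x hqx y
  have hpx : 0 < ∑ u', ∑ y', p (u', x, y') :=
    Finset.sum_pos (fun u _ => hpux u x) Finset.univ_nonempty
  have hterm : ∀ u, (p (u, x, y) / ∑ y', p (u, x, y')) *
      ((∑ y', p (u, x, y')) / (∑ u', ∑ y', p (u', x, y'))) * r u
      = r u * p (u, x, y) / (∑ u', ∑ y', p (u', x, y')) := by
    intro u
    rw [div_mul_div_comm, mul_comm (p (u, x, y)) _,
      mul_div_mul_left _ _ (hpux u x).ne', div_mul_eq_mul_div, mul_comm (p (u, x, y))]
  rw [Finset.sum_congr rfl (fun u _ => hterm u), ← Finset.sum_div]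
  rw [div_mul_div_comm, mul_comm ((∑ u, r u * p (u, x, y))) _,
    mul_div_mul_left _ _ hpx.ne']
  congr 1
  exact Finset.sum_congr rfl fun u _ => hq u x y
end

section
/- Let U, X be nonempty finite types, let p be a pmf on U × X with p(x) > 0 for all x and p(u) > 0 for all u, let r : U → ℝ be nonnegative with ∑_u r(u)·p(u) = 1, and let q(u,x) = r(u)·p(u,x). Define the matrix N : Matrix U X ℝ by N u x = p(u|x) = p(u,x)/p(x) and the vector v : X → ℝ by v x = q(x)/p(x). If N ⬝ Nᵀ is invertible, then r = (N ⬝ Nᵀ)⁻¹ ⬝ N *ᵥ v, i.e. the true importance ratio vector is recovered by the Moore–Penrose-type pseudoinverse formula. -/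
open Matrix

/-- **Pseudoinverse recovery of the importance ratios** (proof of Theorem 1, discrete case).
With `N u x = p(u|x)` and `v x = q(x)/p(x)`, if `N ⬝ Nᵀ` is invertible then
`r = (N ⬝ Nᵀ)⁻¹ ⬝ N *ᵥ v`. -/
theorem stmt_2 {U X : Type*} [Fintype U] [Fintype X] [Nonempty U] [Nonempty X]
    [DecidableEq U]
    (p : U × X → ℝ) (hp0 : ∀ t, 0 ≤ p t) (hp1 : ∑ t, p t = 1)
    (hpx : ∀ x, 0 < ∑ u, p (u, x)) (hpu : ∀ u, 0 < ∑ x, p (u, x))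
    (r : U → ℝ) (hr0 : ∀ u, 0 ≤ r u)
    (hr1 : ∑ u, r u * (∑ x, p (u, x)) = 1)
    (q : U × X → ℝ) (hq : ∀ u x, q (u, x) = r u * p (u, x))
    (N : Matrix U X ℝ) (hN : ∀ u x, N u x = p (u, x) / ∑ u', p (u', x))
    (v : X → ℝ) (hv : ∀ x, v x = (∑ u, q (u, x)) / (∑ u, p (u, x)))
    (hinv : IsUnit (N * Nᵀ).det) :
    r = ((N * Nᵀ)⁻¹ * N) *ᵥ v := by
  have hvN : v = Nᵀ *ᵥ r := by
    funext x
    simp only [hv, mulVec, dotProduct, transpose_apply, hN, hq]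
    rw [Finset.sum_div]
    exact Finset.sum_congr rfl fun u _ => by ring
  rw [hvN, mulVec_mulVec, Matrix.mul_assoc, Matrix.nonsing_inv_mul _ hinv, one_mulVec]
end

section
/- Let U, X be nonempty finite types, let p be a pmf on U × X with p(x) > 0 for all x and p(u) > 0 for all u, let r : U → ℝ be nonnegative with ∑_u r(u)·p(u) = 1, and let q(u,x) = r(u)·p(u,x). Suppose x : U → X is a family of points (indexed by U) such that the square matrix [p(u' | x(i))]_{i,u'} ∈ Matrix U U ℝ, with entries p(u'|x(i)) = p(u',x(i))/p(x(i)), is invertible. If r' : U → ℝ satisfies q(x(i))/p(x(i)) = ∑_{u'} p(u' | x(i)) · r'(u') for all i ∈ U, then r' = r. -/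
open Matrix

/-- **Uniqueness of the importance ratios under Assumption A6** (proof of Theorem 2).
If the square matrix `[p(u' | x(i))]` is invertible and `r'` solves the moment system
`q(x(i))/p(x(i)) = ∑ u', p(u' | x(i)) · r'(u')` for all `i`, then `r' = r`. -/
theorem stmt_3 {U X : Type*} [Fintype U] [Fintype X] [Nonempty U] [Nonempty X]
    [DecidableEq U]
    (p : U × X → ℝ) (hp0 : ∀ t, 0 ≤ p t) (hp1 : ∑ t, p t = 1)
    (hpx : ∀ x, 0 < ∑ u, p (u, x)) (hpu : ∀ u, 0 < ∑ x, p (u, x))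
    (r : U → ℝ) (hr0 : ∀ u, 0 ≤ r u)
    (hr1 : ∑ u, r u * (∑ x, p (u, x)) = 1)
    (q : U × X → ℝ) (hq : ∀ u x, q (u, x) = r u * p (u, x))
    (x : U → X)
    (M : Matrix U U ℝ) (hM : ∀ i u', M i u' = p (u', x i) / ∑ u'', p (u'', x i))
    (hMinv : IsUnit M.det)
    (r' : U → ℝ)
    (hr' : ∀ i, (∑ u, q (u, x i)) / (∑ u, p (u, x i)) = ∑ u', M i u' * r' u') :
    r' = r := by
  have hinj : Function.Injective M.mulVec :=
    Matrix.mulVec_injective_iff_isUnit.2 ((Matrix.isUnit_iff_isUnit_det M).2 hMinv)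
  apply hinj
  funext i
  have h1 : M.mulVec r' i = ∑ u', M i u' * r' u' := rfl
  have h2 : M.mulVec r i = ∑ u', M i u' * r u' := rfl
  rw [h1, h2, ← hr' i]
  have hpos := (hpx (x i)).ne'
  rw [Finset.sum_div]
  congr 1
  funext u'
  rw [hM, hq]
  field_simp
end

section
/- Let U, X, Y be nonempty finite types, let p be a pmf on U × X × Y with p(u,x) > 0 for all u and x, let r : U → ℝ be nonnegative with ∑_u r(u)·p(u) = 1, and let q(u,x,y) = r(u)·p(u,x,y). Then for every x with q(x) > 0 and every y, p(y|x) − q(y|x) = ∑_u p(y|x,u) · p(u|x) · (1 − (p(x)/q(x)) · r(u)), where p(y|x) = p(x,y)/p(x), q(y|x) = q(x,y)/q(x), p(y|x,u) = p(u,x,y)/p(u,x), and p(u|x) = p(u,x)/p(x). -/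
/-- **Exact error of covariate shift adjustment under latent subgroup shift.**
For every `x` with `q(x) > 0` and every `y`,
`p(y|x) − q(y|x) = ∑ u, p(y|x,u) · p(u|x) · (1 − (p(x)/q(x)) · r(u))`. -/
theorem stmt_5 {U X Y : Type*} [Fintype U] [Fintype X] [Fintype Y]
    [Nonempty U] [Nonempty X] [Nonempty Y]
    (p : U × X × Y → ℝ)
    (hp0 : ∀ t, 0 ≤ p t) (hp1 : ∑ t, p t = 1)
    (hpux : ∀ u x, 0 < ∑ y, p (u, x, y))
    (r : U → ℝ) (hr0 : ∀ u, 0 ≤ r u)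
    (hr1 : ∑ u, r u * (∑ x, ∑ y, p (u, x, y)) = 1)
    (q : U × X × Y → ℝ)
    (hq : ∀ u x y, q (u, x, y) = r u * p (u, x, y)) :
    ∀ x, 0 < (∑ u, ∑ y, q (u, x, y)) → ∀ y,
      (∑ u, p (u, x, y)) / (∑ u, ∑ y', p (u, x, y')) -
          (∑ u, q (u, x, y)) / (∑ u, ∑ y', q (u, x, y')) =
        ∑ u, (p (u, x, y) / ∑ y', p (u, x, y')) *
              ((∑ y', p (u, x, y')) / (∑ u', ∑ y', p (u', x, y'))) *
              (1 - ((∑ u', ∑ y', p (u', x, y')) / (∑ u', ∑ y', q (u', x, y'))) * r u) := by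
  intro x hqx y
  have hpx : 0 < ∑ u, ∑ y', p (u, x, y') :=
    Finset.sum_pos (fun u _ => hpux u x) Finset.univ_nonempty
  have key : ∀ u ∈ Finset.univ, (p (u, x, y) / ∑ y', p (u, x, y')) *
        ((∑ y', p (u, x, y')) / (∑ u', ∑ y', p (u', x, y'))) *
        (1 - ((∑ u', ∑ y', p (u', x, y')) / (∑ u', ∑ y', q (u', x, y'))) * r u)
      = p (u, x, y) / (∑ u', ∑ y', p (u', x, y'))
        - q (u, x, y) / (∑ u', ∑ y', q (u', x, y')) := by
    intro u _
    have hu := (hpux u x).ne'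
    have hpx' := hpx.ne'
    have hqx' := hqx.ne'
    rw [hq]
    field_simp
  rw [Finset.sum_congr rfl key, Finset.sum_sub_distrib, ← Finset.sum_div, ← Finset.sum_div]
end

section
/- Let U, X, Y be nonempty finite types, let p be a pmf on U × X × Y with p(u,x) > 0 for all u and x, let r : U → ℝ be nonnegative with ∑_u r(u)·p(u) = 1, and let q(u,x,y) = r(u)·p(u,x,y). Then for every x with q(x) > 0 and every y with p(y) > 0, p(y|x) · (p(x)/q(x)) · (q(y)/p(y)) − q(y|x) = ∑_u p(y|x,u) · p(u|x) · (p(x)/q(x)) · (q(y)/p(y) − r(u)), where p(y) = ∑_{u,x} p(u,x,y), q(y) = ∑_{u,x} q(u,x,y), p(y|x) = p(x,y)/p(x), q(y|x) = q(x,y)/q(x), p(y|x,u) = p(u,x,y)/p(u,x), and p(u|x) = p(u,x)/p(x). -/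
private lemma aux4 (a s b c z : ℝ) (hs : s ≠ 0) (hb : b ≠ 0) :
    a / s * (s / b) * (b / c) * z = a * z / c := by
  by_cases hc : c = 0
  · simp [hc]
  · field_simp

private lemma aux3 (a s c z : ℝ) (hs : s ≠ 0) :
    a / s * (s / c) * z = a * z / c := by
  by_cases hc : c = 0
  · simp [hc]
  · field_simp

/-- **Exact error of label shift adjustment under latent subgroup shift.**
For every `x` with `q(x) > 0` and every `y` with `p(y) > 0`,
`p(y|x)·(p(x)/q(x))·(q(y)/p(y)) − q(y|x)
  = ∑ u, p(y|x,u) · p(u|x) · (p(x)/q(x)) · (q(y)/p(y) − r(u))`. -/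
theorem stmt_6 {U X Y : Type*} [Fintype U] [Fintype X] [Fintype Y]
    [Nonempty U] [Nonempty X] [Nonempty Y]
    (p : U × X × Y → ℝ)
    (hp0 : ∀ t, 0 ≤ p t) (hp1 : ∑ t, p t = 1)
    (hpux : ∀ u x, 0 < ∑ y, p (u, x, y))
    (r : U → ℝ) (hr0 : ∀ u, 0 ≤ r u)
    (hr1 : ∑ u, r u * (∑ x, ∑ y, p (u, x, y)) = 1)
    (q : U × X × Y → ℝ)
    (hq : ∀ u x y, q (u, x, y) = r u * p (u, x, y)) :
    ∀ x, 0 < (∑ u, ∑ y, q (u, x, y)) → ∀ y, 0 < (∑ u, ∑ x', p (u, x', y)) →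
      ((∑ u, p (u, x, y)) / (∑ u, ∑ y', p (u, x, y'))) *
            ((∑ u, ∑ y', p (u, x, y')) / (∑ u, ∑ y', q (u, x, y'))) *
            ((∑ u, ∑ x', q (u, x', y)) / (∑ u, ∑ x', p (u, x', y))) -
          (∑ u, q (u, x, y)) / (∑ u, ∑ y', q (u, x, y')) =
        ∑ u, (p (u, x, y) / ∑ y', p (u, x, y')) *
              ((∑ y', p (u, x, y')) / (∑ u', ∑ y', p (u', x, y'))) *
              ((∑ u', ∑ y', p (u', x, y')) / (∑ u', ∑ y', q (u', x, y'))) *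
              ((∑ u', ∑ x', q (u', x', y)) / (∑ u', ∑ x', p (u', x', y)) - r u) := by

  intro x hqx y hpy
  have hPx : (0:ℝ) < ∑ u, ∑ y', p (u, x, y') :=
    Finset.sum_pos (fun u _ => hpux u x) Finset.univ_nonempty
  have key : ∀ u : U,
      (p (u, x, y) / ∑ y', p (u, x, y')) *
        ((∑ y', p (u, x, y')) / (∑ u', ∑ y', p (u', x, y'))) *
        ((∑ u', ∑ y', p (u', x, y')) / (∑ u', ∑ y', q (u', x, y'))) *
        ((∑ u', ∑ x', q (u', x', y)) / (∑ u', ∑ x', p (u', x', y)) - r u)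
      = p (u, x, y) * ((∑ u', ∑ x', q (u', x', y)) / (∑ u', ∑ x', p (u', x', y)) - r u)
          / (∑ u', ∑ y', q (u', x, y')) := fun u =>
    aux4 _ _ _ _ _ (hpux u x).ne' hPx.ne'
  rw [Finset.sum_congr rfl (fun u _ => key u), ← Finset.sum_div]
  have h2 : ∑ u, p (u, x, y) * ((∑ u', ∑ x', q (u', x', y)) / (∑ u', ∑ x', p (u', x', y)) - r u)
      = (∑ u, p (u, x, y)) * ((∑ u', ∑ x', q (u', x', y)) / (∑ u', ∑ x', p (u', x', y)))
        - ∑ u, q (u, x, y) := by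
    simp only [mul_sub, Finset.sum_sub_distrib, ← Finset.sum_mul]
    congr 1
    simp [hq, mul_comm]
  rw [h2, sub_div]
  congr 1
  rw [aux3 _ _ _ _ hPx.ne', mul_div_assoc]
end

section
/- Let U and I be finite types. Let R : Matrix U I ℝ be such that R ⬝ Rᵀ is invertible, let s : U → ℝ with s u ≠ 0 for all u, let S : Matrix U U ℝ be invertible, and let m : U → ℝ. Set A = Rᵀ ⬝ diagonal s ⬝ S and B = Rᵀ ⬝ diagonal s ⬝ diagonal m ⬝ S. Then Aᵀ ⬝ A is invertible and (Aᵀ ⬝ A)⁻¹ ⬝ Aᵀ ⬝ B = S⁻¹ ⬝ diagonal m ⬝ S. -/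
open Matrix

/-- **The pseudoinverse similarity identity** (equation (5)) at the heart of the proofs of the
paper's Lemma 1 and Theorem 1: with `A = Rᵀ ⬝ diagonal s ⬝ S` and
`B = Rᵀ ⬝ diagonal s ⬝ diagonal m ⬝ S`, the matrix `Aᵀ ⬝ A` is invertible and
`(Aᵀ ⬝ A)⁻¹ ⬝ Aᵀ ⬝ B = S⁻¹ ⬝ diagonal m ⬝ S`. -/
theorem stmt_9 {U I : Type*} [Fintype U] [Fintype I] [DecidableEq U]
    (R : Matrix U I ℝ) (hR : IsUnit (R * Rᵀ).det)
    (s : U → ℝ) (hs : ∀ u, s u ≠ 0)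
    (S : Matrix U U ℝ) (hS : IsUnit S.det)
    (m : U → ℝ)
    (A B : Matrix I U ℝ)
    (hA : A = Rᵀ * diagonal s * S)
    (hB : B = Rᵀ * diagonal s * diagonal m * S) :
    IsUnit (Aᵀ * A).det ∧ (Aᵀ * A)⁻¹ * Aᵀ * B = S⁻¹ * diagonal m * S := by
  have hD : IsUnit (diagonal s).det := by
    rw [det_diagonal]
    exact isUnit_iff_ne_zero.mpr (Finset.prod_ne_zero_iff.mpr fun u _ => hs u)
  have hST : IsUnit Sᵀ.det := by rwa [det_transpose]
  have hAA : Aᵀ * A = Sᵀ * diagonal s * (R * Rᵀ) * diagonal s * S := by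
    subst hA
    simp only [transpose_mul, transpose_transpose, diagonal_transpose, Matrix.mul_assoc]
  have hdet : IsUnit (Aᵀ * A).det := by
    rw [hAA]
    simp only [det_mul]
    exact (((hST.mul hD).mul hR).mul hD).mul hS
  refine ⟨hdet, ?_⟩
  have key : Aᵀ * B = (Aᵀ * A) * (S⁻¹ * diagonal m * S) := by
    rw [hAA, hB, hA]
    have : Sᵀ * diagonal s * (R * Rᵀ) * diagonal s * S * (S⁻¹ * diagonal m * S)
        = Sᵀ * diagonal s * (R * Rᵀ) * diagonal s * (S * S⁻¹) * (diagonal m * S) := by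
      simp only [Matrix.mul_assoc]
    rw [this, mul_nonsing_inv S hS, mul_one]
    simp only [transpose_mul, transpose_transpose, diagonal_transpose, Matrix.mul_assoc]
  rw [Matrix.mul_assoc, key, ← Matrix.mul_assoc, nonsing_inv_mul _ hdet, one_mul, Matrix.mul_assoc]
end

section
/- Let U and I be finite types. Let R : Matrix U I ℝ with R ⬝ Rᵀ invertible, s : U → ℝ with s u ≠ 0 for all u, S : Matrix U U ℝ invertible, and m : U → ℝ. Set A = Rᵀ ⬝ diagonal s ⬝ S and B = Rᵀ ⬝ diagonal s ⬝ diagonal m ⬝ S. Then a real number λ is an eigenvalue of the matrix (Aᵀ ⬝ A)⁻¹ ⬝ Aᵀ ⬝ B (i.e., there exists a nonzero vector v : U → ℝ with ((Aᵀ⬝A)⁻¹⬝Aᵀ⬝B) *ᵥ v = λ • v) if and only if λ = m u for some u ∈ U. -/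
open Matrix

/-- **Eigenvalue identification step** in the proof of the paper's Lemma A.2
(variant of Kuroki–Pearl): the eigenvalues of `(Aᵀ ⬝ A)⁻¹ ⬝ Aᵀ ⬝ B` are exactly the values
`m u`. -/
theorem stmt_10 {U I : Type*} [Fintype U] [Fintype I] [DecidableEq U]
    (R : Matrix U I ℝ) (hR : IsUnit (R * Rᵀ).det)
    (s : U → ℝ) (hs : ∀ u, s u ≠ 0)
    (S : Matrix U U ℝ) (hS : IsUnit S.det)
    (m : U → ℝ)
    (A B : Matrix I U ℝ)
    (hA : A = Rᵀ * diagonal s * S)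
    (hB : B = Rᵀ * diagonal s * diagonal m * S)
    (lam : ℝ) :
    (∃ v : U → ℝ, v ≠ 0 ∧ ((Aᵀ * A)⁻¹ * Aᵀ * B) *ᵥ v = lam • v) ↔ ∃ u, lam = m u := by
  set D : Matrix U U ℝ := diagonal s with hD
  set M : Matrix U U ℝ := diagonal m with hM
  have hDdet : IsUnit D.det := by
    rw [hD, det_diagonal]
    exact isUnit_iff_ne_zero.2 (Finset.prod_ne_zero_iff.2 fun u _ => hs u)
  set K : Matrix U U ℝ := D * (R * Rᵀ) * D with hK
  have hKdet : IsUnit K.det := by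
    rw [hK, det_mul, det_mul]
    exact (hDdet.mul hR).mul hDdet
  have hSTdet : IsUnit Sᵀ.det := by rwa [det_transpose]
  have hAT : Aᵀ = Sᵀ * D * R := by
    rw [hA, Matrix.transpose_mul, Matrix.transpose_mul]
    rw [show Dᵀ = D from by rw [hD, Matrix.diagonal_transpose]]
    simp only [Matrix.transpose_transpose, Matrix.mul_assoc]
  have hATA : Aᵀ * A = Sᵀ * K * S := by
    rw [hAT, hA, hK]
    simp only [Matrix.mul_assoc]
  have hATB : Aᵀ * B = Sᵀ * K * (M * S) := by
    rw [hAT, hB, hK]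
    simp only [Matrix.mul_assoc]
  have key : (Aᵀ * A)⁻¹ * Aᵀ * B = S⁻¹ * (M * S) := by
    rw [Matrix.mul_assoc, hATB, hATA, Matrix.mul_inv_rev, Matrix.mul_inv_rev]
    simp only [Matrix.mul_assoc]
    rw [Matrix.nonsing_inv_mul_cancel_left _ _ hSTdet,
      Matrix.nonsing_inv_mul_cancel_left _ _ hKdet]
  rw [key]
  constructor
  · rintro ⟨v, hv, hvec⟩
    set w : U → ℝ := S *ᵥ v with hw
    have hw0 : w ≠ 0 := by
      intro h
      apply hv
      have : S⁻¹ *ᵥ (S *ᵥ v) = S⁻¹ *ᵥ 0 := by rw [← hw, h]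
      rwa [Matrix.mulVec_mulVec, Matrix.nonsing_inv_mul _ hS, Matrix.one_mulVec,
        Matrix.mulVec_zero] at this
    have hMw : M *ᵥ w = lam • w := by
      have := congrArg (S *ᵥ ·) hvec
      simp only [Matrix.mulVec_mulVec, Matrix.mulVec_smul] at this
      rw [← Matrix.mul_assoc, Matrix.mul_nonsing_inv _ hS, Matrix.one_mul] at this
      rw [hw, Matrix.mulVec_mulVec]
      exact this
    obtain ⟨u, hu⟩ := Function.ne_iff.1 hw0
    simp only [Pi.zero_apply] at hu
    refine ⟨u, ?_⟩
    have h1 := congrFun hMw u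
    rw [hM] at h1
    simp only [Matrix.mulVec_diagonal, Pi.smul_apply, smul_eq_mul] at h1
    have h2 : (m u - lam) * w u = 0 := by ring_nf; linarith
    rcases mul_eq_zero.1 h2 with h | h
    · linarith
    · exact absurd h hu
  · rintro ⟨u, rfl⟩
    refine ⟨S⁻¹ *ᵥ Pi.single u 1, ?_, ?_⟩
    · intro h
      have : S *ᵥ (S⁻¹ *ᵥ Pi.single u 1) = 0 := by rw [h, Matrix.mulVec_zero]
      rw [Matrix.mulVec_mulVec, Matrix.mul_nonsing_inv _ hS, Matrix.one_mulVec] at this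
      have h2 := congrFun this u
      simp only [Pi.single_eq_same, Pi.zero_apply] at h2
      exact one_ne_zero h2
    · rw [Matrix.mulVec_mulVec]
      have hc : S⁻¹ * (M * S) * S⁻¹ = S⁻¹ * M := by
        simp only [Matrix.mul_assoc]
        rw [Matrix.mul_nonsing_inv _ hS, Matrix.mul_one]
      rw [hc, ← Matrix.mulVec_mulVec]
      have hMe : M *ᵥ Pi.single u 1 = m u • (Pi.single u 1 : U → ℝ) := by
        funext x
        rw [hM]
        rcases eq_or_ne x u with rfl | hx
        · simp [Matrix.mulVec_diagonal]
        · simp [Matrix.mulVec_diagonal, Pi.single_eq_of_ne hx]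
      rw [hMe, Matrix.mulVec_smul]
end

section
/- Let ι be a nonempty finite type with a designated element j₀, let m : ι → ℝ be injective, and let S : Matrix ι ι ℝ be invertible with S i j₀ = 1 for all i. Suppose H : Matrix ι ι ℝ is invertible and satisfies (S⁻¹ ⬝ diagonal m ⬝ S) ⬝ H = H ⬝ diagonal m. Then for every i, (H⁻¹) i j₀ ≠ 0, and for all i, j, S i j = (H⁻¹ i j) / (H⁻¹ i j₀). In particular, S is uniquely recovered from any invertible matrix of eigenvectors of S⁻¹ ⬝ diagonal m ⬝ S. -/
open Matrix

/-- **Normalization step recovering `p(W|Ũ)`** in the proof of Lemma A.2: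
`S` is uniquely recovered from any invertible matrix `H` of eigenvectors of
`S⁻¹ ⬝ diagonal m ⬝ S` by rescaling the rows of `H⁻¹` by its designated column. -/
theorem stmt_11 {ι : Type*} [Fintype ι] [Nonempty ι] [DecidableEq ι]
    (j₀ : ι) (m : ι → ℝ) (hm : Function.Injective m)
    (S : Matrix ι ι ℝ) (hS : IsUnit S.det) (hSj₀ : ∀ i, S i j₀ = 1)
    (H : Matrix ι ι ℝ) (hH : IsUnit H.det)
    (hHeig : (S⁻¹ * diagonal m * S) * H = H * diagonal m) :
    (∀ i, H⁻¹ i j₀ ≠ 0) ∧ ∀ i j, S i j = H⁻¹ i j / H⁻¹ i j₀ := by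
  -- multiply hHeig on the left by S
  have hcomm : diagonal m * (S * H) = (S * H) * diagonal m := by
    have := congrArg (fun M => S * M) hHeig
    simp only [← Matrix.mul_assoc] at this ⊢
    rwa [Matrix.mul_nonsing_inv S hS, Matrix.one_mul] at this
  -- S*H commutes with diagonal with distinct entries ⇒ it's diagonal
  set M := S * H with hM
  have hMdiag : M = diagonal (fun i => M i i) := by
    ext i j
    by_cases hij : i = j
    · subst hij; simp
    · have h1 : (diagonal m * M) i j = m i * M i j := by
        simp [Matrix.mul_apply, Matrix.diagonal_apply, Finset.sum_ite_eq]
      have h2 : (M * diagonal m) i j = M i j * m j := by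
        simp [Matrix.mul_apply, Matrix.diagonal_apply, Finset.sum_ite_eq]
      have := congrFun (congrFun hcomm i) j
      rw [h1, h2] at this
      have hmne : m i ≠ m j := fun h => hij (hm h)
      have : M i j * (m i - m j) = 0 := by ring_nf; linarith [this]
      rcases mul_eq_zero.mp this with h | h
      · simp [Matrix.diagonal_apply, hij, h]
      · exact absurd (by linarith : m i = m j) hmne
  set d : ι → ℝ := fun i => M i i with hd
  have hSeq : S = diagonal d * H⁻¹ := by
    have : M * H⁻¹ = S := by
      rw [hM, Matrix.mul_assoc, Matrix.mul_nonsing_inv H hH, Matrix.mul_one]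
    rw [← this, hMdiag]
  have hdet : IsUnit (diagonal d).det := by
    rw [← hMdiag, hM, Matrix.det_mul]; exact hS.mul hH
  have hdne : ∀ i, d i ≠ 0 := by
    intro i hi
    rw [Matrix.det_diagonal] at hdet
    have := hdet.ne_zero
    exact this (Finset.prod_eq_zero (Finset.mem_univ i) hi)
  have hSij : ∀ i j, S i j = d i * H⁻¹ i j := by
    intro i j
    rw [hSeq, Matrix.diagonal_mul]
  have hj₀ : ∀ i, d i * H⁻¹ i j₀ = 1 := fun i => by rw [← hSij, hSj₀]
  have hne : ∀ i, H⁻¹ i j₀ ≠ 0 := by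
    intro i h
    have := hj₀ i
    rw [h, mul_zero] at this
    simp at this
  refine ⟨hne, fun i j => ?_⟩
  have hinv : H⁻¹ i j₀ = 1 / d i :=
    eq_one_div_of_mul_eq_one_left (by rw [mul_comm]; exact hj₀ i)
  rw [hSij, hinv, div_div_eq_mul_div, div_one]
  ring
end

section
/- Let ι and I be finite types and j₀ : ι a designated element. Suppose (R, s, m, S) and (R', s', m', S') satisfy: R, R' : Matrix ι I ℝ with R ⬝ Rᵀ and R' ⬝ R'ᵀ invertible; s, s' : ι → ℝ with s i ≠ 0 and s' i ≠ 0 for all i; m, m' : ι → ℝ injective; S, S' : Matrix ι ι ℝ invertible with S i j₀ = 1 and S' i j₀ = 1 for all i. If Rᵀ ⬝ diagonal s ⬝ S = R'ᵀ ⬝ diagonal s' ⬝ S' and Rᵀ ⬝ diagonal s ⬝ diagonal m ⬝ S = R'ᵀ ⬝ diagonal s' ⬝ diagonal m' ⬝ S', then there exists a bijection σ : ι ≃ ι such that m' i = m (σ i) for all i and S' i j = S (σ i) j for all i, j. -/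
/-!
Write `Y = Rᵀ ⬝ diagonal s`, so the hypotheses read `Y S = Y' S'` and `Y D S = Y' D' S'` with
`D = diagonal m`. Since `R Rᵀ` is invertible, `Y` has a left inverse, and eliminating `Y'` shows
that `P = S S'⁻¹` intertwines the diagonals: `D P = P D'`. Entrywise this says
`(m i - m' j) P i j = 0`; as `P` is invertible and `m'` injective, `P` is a monomial matrix
supported on the graph of a permutation `σ` with `m ∘ σ = m'`. Hence row `σ i` of `S = P S'` is a
multiple of row `i` of `S'`, and the normalisation of column `j₀` forces that multiple to be `1`.
-/

open Matrix

namespace Matrix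

theorem mul_apply_eq_of_row_eq_zero {l n o α : Type*} [Fintype n] [NonUnitalNonAssocSemiring α]
    {P : Matrix l n α} {i : l} {j : n} (h : ∀ j', j' ≠ j → P i j' = 0) (M : Matrix n o α)
    (k : o) : (P * M) i k = P i j * M j k :=
  Finset.sum_eq_single j (fun j' _ hj' => by simp only [h j' hj', zero_mul])
    fun hj => (hj (Finset.mem_univ j)).elim

variable {ι κ I α : Type*} [Fintype ι] [DecidableEq ι]

theorem transpose_mul_diagonal_mul_right_injective [Field α] [Fintype I] {R : Matrix ι I α}
    {s : ι → α} (hR : IsUnit (R * Rᵀ).det) (hs : ∀ i, s i ≠ 0) :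
    Function.Injective (fun M : Matrix ι κ α => Rᵀ * diagonal s * M) := by
  refine mul_right_injective_of_inv (diagonal s⁻¹ * (R * Rᵀ)⁻¹ * R) _ ?_
  calc diagonal s⁻¹ * (R * Rᵀ)⁻¹ * R * (Rᵀ * diagonal s)
      = diagonal s⁻¹ * ((R * Rᵀ)⁻¹ * (R * Rᵀ)) * diagonal s := by simp only [Matrix.mul_assoc]
    _ = 1 := by simp [nonsing_inv_mul _ hR, inv_mul_cancel₀ (hs _)]

theorem mul_mul_nonsing_inv_eq_of_mul_eq_mul [CommRing α] [Fintype κ]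
    {Y Y' : Matrix κ ι α} {S S' D D' : Matrix ι ι α}
    (hY : Function.Injective (fun M : Matrix ι ι α => Y * M)) (hS' : IsUnit S'.det)
    (h₁ : Y * S = Y' * S') (h₂ : Y * D * S = Y' * D' * S') :
    D * (S * S'⁻¹) = S * S'⁻¹ * D' := by
  have hY' : Y' = Y * (S * S'⁻¹) := by
    rw [← Matrix.mul_assoc, h₁, mul_nonsing_inv_cancel_right _ _ hS']
  have hDS : D * S = S * S'⁻¹ * D' * S' :=
    hY <| by simp only [← Matrix.mul_assoc]; rw [h₂, hY', ← Matrix.mul_assoc Y S]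
  rw [← mul_assoc, hDS, mul_nonsing_inv_cancel_right _ _ hS']

theorem eq_of_diagonal_mul_eq_mul_diagonal [CommRing α] [IsDomain α] {P : Matrix ι ι α} {m m' : ι → α}
    (h : diagonal m * P = P * diagonal m') {i j : ι} (hij : P i j ≠ 0) : m i = m' j := by
  have := congr_fun₂ h i j
  rw [diagonal_mul, mul_diagonal, mul_comm (m i)] at this
  exact mul_left_cancel₀ hij this

theorem exists_equiv_of_diagonal_mul_eq_mul_diagonal [CommRing α] [IsDomain α]
    {P : Matrix ι ι α} {m m' : ι → α} (hP : IsUnit P.det) (hm' : Function.Injective m')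
    (h : diagonal m * P = P * diagonal m') :
    ∃ σ : ι ≃ ι, (∀ j, m (σ j) = m' j) ∧ ∀ i j, j ≠ i → P (σ i) j = 0 := by
  have hcol : ∀ j, ∃ i, P i j ≠ 0 := fun j => by
    by_contra! hj
    exact hP.ne_zero (det_eq_zero_of_column_eq_zero j hj)
  choose f hf using hcol
  have hmf : ∀ j, m (f j) = m' j := fun j => eq_of_diagonal_mul_eq_mul_diagonal h (hf j)
  have hf_inj : Function.Injective f := fun a b hab => hm' <| by rw [← hmf a, ← hmf b, hab]
  refine ⟨Equiv.ofBijective f (Finite.injective_iff_bijective.mp hf_inj), hmf, fun i j hji => ?_⟩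
  by_contra hne
  exact hji <| hm' <| (eq_of_diagonal_mul_eq_mul_diagonal h hne).symm.trans (hmf i)

end Matrix

theorem stmt_12_general {ι I : Type*} [Fintype ι] [Fintype I] [DecidableEq ι]
    (j₀ : ι)
    (R R' : Matrix ι I ℝ)
    (hR : IsUnit (R * Rᵀ).det)
    (s s' : ι → ℝ) (hs : ∀ i, s i ≠ 0)
    (m m' : ι → ℝ) (hm' : Function.Injective m')
    (S S' : Matrix ι ι ℝ) (hS : IsUnit S.det) (hS' : IsUnit S'.det)
    (hSj₀ : ∀ i, S i j₀ = 1) (hS'j₀ : ∀ i, S' i j₀ = 1)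
    (hAB1 : Rᵀ * diagonal s * S = R'ᵀ * diagonal s' * S')
    (hAB2 : Rᵀ * diagonal s * diagonal m * S = R'ᵀ * diagonal s' * diagonal m' * S') :
    ∃ σ : ι ≃ ι, (∀ i, m' i = m (σ i)) ∧ ∀ i j, S' i j = S (σ i) j := by
  set P := S * S'⁻¹
  have hP : IsUnit P.det := by
    rw [det_mul, det_nonsing_inv]
    exact hS.mul (isUnit_ringInverse.mpr hS')
  have hconj : diagonal m * P = P * diagonal m' :=
    mul_mul_nonsing_inv_eq_of_mul_eq_mul (transpose_mul_diagonal_mul_right_injective hR hs)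
      hS' hAB1 hAB2
  obtain ⟨σ, hσm, hσP⟩ := exists_equiv_of_diagonal_mul_eq_mul_diagonal hP hm' hconj
  have hrow : ∀ i k, S (σ i) k = P (σ i) i * S' i k := fun i k => by
    rw [← mul_apply_eq_of_row_eq_zero (hσP i), nonsing_inv_mul_cancel_right _ _ hS']
  have hscale : ∀ i, P (σ i) i = 1 := fun i => by
    simpa only [hSj₀, hS'j₀, mul_one] using (hrow i j₀).symm
  exact ⟨σ, fun i => (hσm i).symm, fun i j => by rw [hrow, hscale, one_mul]⟩

/-- **Identifiability content of the paper's Lemma A.2** (variant of Kuroki–Pearl's Theorem 1):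
if two latent-variable parameterizations induce the same observable matrices
`A = Rᵀ ⬝ diagonal s ⬝ S` and `B = Rᵀ ⬝ diagonal s ⬝ diagonal m ⬝ S`, then the mixture
parameters `(m, S)` agree up to a permutation of the latent categories. -/
theorem stmt_12 {ι I : Type*} [Fintype ι] [Fintype I] [DecidableEq ι]
    (j₀ : ι)
    (R R' : Matrix ι I ℝ)
    (hR : IsUnit (R * Rᵀ).det) (hR' : IsUnit (R' * R'ᵀ).det)
    (s s' : ι → ℝ) (hs : ∀ i, s i ≠ 0) (hs' : ∀ i, s' i ≠ 0)
    (m m' : ι → ℝ) (hm : Function.Injective m) (hm' : Function.Injective m')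
    (S S' : Matrix ι ι ℝ) (hS : IsUnit S.det) (hS' : IsUnit S'.det)
    (hSj₀ : ∀ i, S i j₀ = 1) (hS'j₀ : ∀ i, S' i j₀ = 1)
    (hAB1 : Rᵀ * diagonal s * S = R'ᵀ * diagonal s' * S')
    (hAB2 : Rᵀ * diagonal s * diagonal m * S = R'ᵀ * diagonal s' * diagonal m' * S') :
    ∃ σ : ι ≃ ι, (∀ i, m' i = m (σ i)) ∧ ∀ i j, S' i j = S (σ i) j :=
  stmt_12_general j₀ R R' hR s s' hs m m' hm' S S' hS hS' hSj₀ hS'j₀ hAB1 hAB2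
end

section
/- Let V, W, U be nonempty finite types and p a pmf on V × W × U satisfying the conditional independence V ⊥ W | U in the form p(v,w,u) · p(u) = p(v,u) · p(w,u) for all v, w, u, with p(u) > 0 for all u and p(w) > 0 for all w. Then: (i) for all v, w, p(v|w) = ∑_u p(v|u) · p(u|w), where p(v|w) = p(v,w)/p(w), p(v|u) = p(v,u)/p(u), p(u|w) = p(w,u)/p(w); and (ii) if K : Matrix U W ℝ defined by K u w = p(u|w) satisfies K ⬝ Kᵀ invertible, then for all v and u, p(v|u) = (L ⬝ Kᵀ ⬝ (K ⬝ Kᵀ)⁻¹) v u, where L : Matrix V W ℝ is given by L v w = p(v|w). -/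
open Matrix

/-- **Identification step (b) in the proof of the paper's Lemma 1:**
under the conditional independence `V ⊥ W | U`, the conditionals satisfy the linear system
`p(V|W) = p(V|Ũ) p(Ũ|W)` and `p(V|Ũ)` is recovered via the pseudoinverse. -/
theorem stmt_14 {V W U : Type*} [Fintype V] [Fintype W] [Fintype U]
    [Nonempty V] [Nonempty W] [Nonempty U] [DecidableEq U]
    (p : V × W × U → ℝ) (hp0 : ∀ t, 0 ≤ p t) (hp1 : ∑ t, p t = 1)
    (hCI : ∀ v w u,
      p (v, w, u) * (∑ v', ∑ w', p (v', w', u)) =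
        (∑ w', p (v, w', u)) * (∑ v', p (v', w, u)))
    (hpu : ∀ u, 0 < ∑ v, ∑ w, p (v, w, u))
    (hpw : ∀ w, 0 < ∑ v, ∑ u, p (v, w, u)) :
    (∀ v w,
      (∑ u, p (v, w, u)) / (∑ v', ∑ u, p (v', w, u)) =
        ∑ u, ((∑ w', p (v, w', u)) / (∑ v', ∑ w', p (v', w', u))) *
          ((∑ v', p (v', w, u)) / (∑ v', ∑ u', p (v', w, u')))) ∧
    (∀ (K : Matrix U W ℝ), (∀ u w, K u w = (∑ v', p (v', w, u)) / (∑ v', ∑ u', p (v', w, u'))) →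
      IsUnit (K * Kᵀ).det →
      ∀ (L : Matrix V W ℝ), (∀ v w, L v w = (∑ u, p (v, w, u)) / (∑ v', ∑ u, p (v', w, u))) →
      ∀ v u, (∑ w', p (v, w', u)) / (∑ v', ∑ w', p (v', w', u)) =
        (L * Kᵀ * (K * Kᵀ)⁻¹) v u) := by
  have hpoint : ∀ v w u, p (v, w, u) =
      ((∑ w', p (v, w', u)) * (∑ v', p (v', w, u))) / (∑ v', ∑ w', p (v', w', u)) := by
    intro v w u
    have h := hCI v w u
    have hne : (∑ v', ∑ w', p (v', w', u)) ≠ 0 := ne_of_gt (hpu u)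
    field_simp
    linarith
  have part1 : ∀ v w,
      (∑ u, p (v, w, u)) / (∑ v', ∑ u, p (v', w, u)) =
        ∑ u, ((∑ w', p (v, w', u)) / (∑ v', ∑ w', p (v', w', u))) *
          ((∑ v', p (v', w, u)) / (∑ v', ∑ u', p (v', w, u'))) := by
    intro v w
    have hw : (∑ v', ∑ u', p (v', w, u')) ≠ 0 := ne_of_gt (hpw w)
    rw [div_eq_iff hw, Finset.sum_mul]
    apply Finset.sum_congr rfl
    intro u _
    have hu : (∑ v', ∑ w', p (v', w', u)) ≠ 0 := ne_of_gt (hpu u)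
    rw [hpoint v w u]
    field_simp
  refine ⟨part1, ?_⟩
  intro K hK hdet L hL v u
  set M : Matrix V U ℝ :=
    fun v u => (∑ w', p (v, w', u)) / (∑ v', ∑ w', p (v', w', u)) with hM
  have hLMK : L = M * K := by
    ext v w
    rw [hL, Matrix.mul_apply, part1 v w]
    apply Finset.sum_congr rfl
    intro u _
    rw [hK, hM]
  have : L * Kᵀ * (K * Kᵀ)⁻¹ = M := by
    rw [hLMK, Matrix.mul_assoc, Matrix.mul_assoc, ← Matrix.mul_assoc K,
      Matrix.mul_nonsing_inv _ hdet, Matrix.mul_one]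
  rw [this]
end

section
/- A latent-subgroup model on nonempty finite types (U, W, X, C, Y) is a tuple θ = (π, φ, ξ, γ, η) where π is a pmf on U with π(u) > 0 for all u, φ(·|u) is a pmf on W for each u, ξ(·|u) is a pmf on X for each u, γ(·|x,u) is a pmf on C for each (x,u), and η(·|c,u) is a pmf on Y for each (c,u); its joint pmf is p_θ(w,x,c,y,u) = π(u)·φ(w|u)·ξ(x|u)·γ(c|x,u)·η(y|c,u). Suppose θ and θ' are two latent-subgroup models on the same types, each satisfying: (i) the functions w ↦ φ(w|u), u ∈ U, are linearly independent; (ii) there exist c* ∈ C and y* ∈ Y such that p_θ(c*, u) > 0 for all u, the functions x ↦ p_θ(x | C=c*, U=u), u ∈ U, are linearly independent, and the values η(y*|c*,u), u ∈ U, are pairwise distinct (and analogously for θ'). If the observed marginals agree, i.e. ∑_u p_θ(w,x,c,y,u) = ∑_u p_θ'(w,x,c,y,u) for all (w,x,c,y), then there exists a bijection σ : U ≃ U such that p_θ'(w,x,c,y,u) = p_θ(w,x,c,y,σ(u)) for all (w,x,c,y,u). -/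
/-- The joint pmf of a latent-subgroup model `θ = (π, φ, ξ, γ, η)` on `(U, W, X, C, Y)`:
`p_θ(w,x,c,y,u) = π(u)·φ(w|u)·ξ(x|u)·γ(c|x,u)·η(y|c,u)`. -/
def jointPmf {U W X C Y : Type*}
    (π : U → ℝ) (φ : U → W → ℝ) (ξ : U → X → ℝ)
    (γ : X → U → C → ℝ) (η : C → U → Y → ℝ) :
    W × X × C × Y × U → ℝ :=
  fun t => match t with
    | (w, x, c, y, u) => π u * φ u w * ξ u x * γ x u c * η c u y

/-- **The paper's Lemma 1:** under the stated rank/distinctness conditions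
(Assumptions A3–A4), all probability mass functions over `(W,X,C,Y,U)` in the source
distribution of a latent-subgroup model are identified from the observed marginal over
`(W,X,C,Y)`, up to a permutation of the latent categories of `U`. -/
theorem stmt_16 {U W X C Y : Type*}
    [Fintype U] [Fintype W] [Fintype X] [Fintype C] [Fintype Y]
    [Nonempty U] [Nonempty W] [Nonempty X] [Nonempty C] [Nonempty Y]
    -- model θ
    (π : U → ℝ) (φ : U → W → ℝ) (ξ : U → X → ℝ)
    (γ : X → U → C → ℝ) (η : C → U → Y → ℝ)
    (hπ0 : ∀ u, 0 < π u) (hπ1 : ∑ u, π u = 1)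
    (hφ0 : ∀ u w, 0 ≤ φ u w) (hφ1 : ∀ u, ∑ w, φ u w = 1)
    (hξ0 : ∀ u x, 0 ≤ ξ u x) (hξ1 : ∀ u, ∑ x, ξ u x = 1)
    (hγ0 : ∀ x u c, 0 ≤ γ x u c) (hγ1 : ∀ x u, ∑ c, γ x u c = 1)
    (hη0 : ∀ c u y, 0 ≤ η c u y) (hη1 : ∀ c u, ∑ y, η c u y = 1)
    -- model θ'
    (π' : U → ℝ) (φ' : U → W → ℝ) (ξ' : U → X → ℝ)
    (γ' : X → U → C → ℝ) (η' : C → U → Y → ℝ)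
    (hπ0' : ∀ u, 0 < π' u) (hπ1' : ∑ u, π' u = 1)
    (hφ0' : ∀ u w, 0 ≤ φ' u w) (hφ1' : ∀ u, ∑ w, φ' u w = 1)
    (hξ0' : ∀ u x, 0 ≤ ξ' u x) (hξ1' : ∀ u, ∑ x, ξ' u x = 1)
    (hγ0' : ∀ x u c, 0 ≤ γ' x u c) (hγ1' : ∀ x u, ∑ c, γ' x u c = 1)
    (hη0' : ∀ c u y, 0 ≤ η' c u y) (hη1' : ∀ c u, ∑ y, η' c u y = 1)
    -- (i) linear independence of the proxy conditionals
    (hWli : LinearIndependent ℝ φ)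
    (hWli' : LinearIndependent ℝ φ')
    -- (ii) existence of c*, y* with the rank/distinctness conditions
    (hcy : ∃ (cs : C) (ys : Y),
      (∀ u, 0 < ∑ w, ∑ x, ∑ y, jointPmf π φ ξ γ η (w, x, cs, y, u)) ∧
      LinearIndependent ℝ (fun u => fun x =>
        (∑ w, ∑ y, jointPmf π φ ξ γ η (w, x, cs, y, u)) /
          (∑ w, ∑ x', ∑ y, jointPmf π φ ξ γ η (w, x', cs, y, u))) ∧
      Function.Injective (fun u => η cs u ys))
    (hcy' : ∃ (cs : C) (ys : Y),
      (∀ u, 0 < ∑ w, ∑ x, ∑ y, jointPmf π' φ' ξ' γ' η' (w, x, cs, y, u)) ∧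
      LinearIndependent ℝ (fun u => fun x =>
        (∑ w, ∑ y, jointPmf π' φ' ξ' γ' η' (w, x, cs, y, u)) /
          (∑ w, ∑ x', ∑ y, jointPmf π' φ' ξ' γ' η' (w, x', cs, y, u))) ∧
      Function.Injective (fun u => η' cs u ys))
    -- equality of observed marginals
    (hobs : ∀ w x c y,
      (∑ u, jointPmf π φ ξ γ η (w, x, c, y, u)) =
        ∑ u, jointPmf π' φ' ξ' γ' η' (w, x, c, y, u)) :
    ∃ σ : U ≃ U, ∀ w x c y u,
      jointPmf π' φ' ξ' γ' η' (w, x, c, y, u) =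
        jointPmf π φ ξ γ η (w, x, c, y, σ u) := by
  classical
  obtain ⟨cs, ys, hpos', hLI', hinj'⟩ := hcy'
  -- Local abbreviations
  set n : U → X → ℝ := fun u x => π u * ξ u x * γ x u cs with hn
  set n' : U → X → ℝ := fun u x => π' u * ξ' u x * γ' x u cs with hn'
  set lam : U → ℝ := fun u => η' cs u ys with hlam
  set mu : U → ℝ := fun u => η cs u ys with hmu
  -- per-y sums
  have hy : ∀ u w x, (∑ y, jointPmf π φ ξ γ η (w, x, cs, y, u)) = φ u w * n u x := by
    intro u w x
    simp only [jointPmf, hn]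
    rw [← Finset.mul_sum, hη1]; ring
  have hy' : ∀ u w x, (∑ y, jointPmf π' φ' ξ' γ' η' (w, x, cs, y, u)) = φ' u w * n' u x := by
    intro u w x
    simp only [jointPmf, hn']
    rw [← Finset.mul_sum, hη1']; ring
  have h2' : ∀ u x, (∑ w, ∑ y, jointPmf π' φ' ξ' γ' η' (w, x, cs, y, u)) = n' u x := by
    intro u x
    rw [Finset.sum_congr rfl fun w _ => hy' u w x, ← Finset.sum_mul, hφ1', one_mul]
  have h1' : ∀ u, (∑ w, ∑ x, ∑ y, jointPmf π' φ' ξ' γ' η' (w, x, cs, y, u)) = ∑ x, n' u x := by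
    intro u
    have : ∀ w, (∑ x, ∑ y, jointPmf π' φ' ξ' γ' η' (w, x, cs, y, u))
        = φ' u w * ∑ x, n' u x := by
      intro w
      rw [Finset.mul_sum]
      exact Finset.sum_congr rfl fun x _ => hy' u w x
    rw [Finset.sum_congr rfl fun w _ => this w, ← Finset.sum_mul, hφ1', one_mul]
  simp only [h2', h1'] at hLI' hpos'
  -- positivity of the denominators
  have hD0 : ∀ u, (∑ x, n' u x) ≠ 0 := fun u => ne_of_gt (hpos' u)
  -- linear independence of n'
  have hLIn' : LinearIndependent ℝ n' := by
    rw [Fintype.linearIndependent_iff]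
    intro g hg u
    have key := Fintype.linearIndependent_iff.mp hLI'
      (fun u => g u * (∑ x, n' u x)) ?_ u
    · exact (mul_eq_zero.mp key).resolve_right (hD0 u)
    · funext x
      have hterm : ∀ u, (g u * (∑ x', n' u x')) * (n' u x / (∑ x', n' u x'))
          = g u * n' u x := by
        intro u
        have h := hD0 u
        field_simp
      have hgx := congrFun hg x
      simp only [Finset.sum_apply, Pi.smul_apply, smul_eq_mul, Pi.zero_apply] at hgx ⊢
      rw [Finset.sum_congr rfl fun u _ => hterm u]
      exact hgx
  -- observed matrix equalities
  have hF1 : ∀ w x, (∑ u, φ u w * n u x) = ∑ u, φ' u w * n' u x := by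
    intro w x
    calc ∑ u, φ u w * n u x
        = ∑ u, ∑ y, jointPmf π φ ξ γ η (w, x, cs, y, u) :=
          (Finset.sum_congr rfl fun u _ => (hy u w x).symm)
      _ = ∑ y, ∑ u, jointPmf π φ ξ γ η (w, x, cs, y, u) := Finset.sum_comm
      _ = ∑ y, ∑ u, jointPmf π' φ' ξ' γ' η' (w, x, cs, y, u) :=
          Finset.sum_congr rfl fun y _ => hobs w x cs y
      _ = ∑ u, ∑ y, jointPmf π' φ' ξ' γ' η' (w, x, cs, y, u) := Finset.sum_comm
      _ = ∑ u, φ' u w * n' u x := Finset.sum_congr rfl fun u _ => hy' u w x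
  have hF2 : ∀ w x, (∑ u, (φ u w * mu u) * n u x) = ∑ u, (φ' u w * lam u) * n' u x := by
    intro w x
    have h := hobs w x cs ys
    calc ∑ u, (φ u w * mu u) * n u x
        = ∑ u, jointPmf π φ ξ γ η (w, x, cs, ys, u) := by
          refine Finset.sum_congr rfl fun u _ => ?_
          simp only [jointPmf, hn, hmu]; ring
      _ = ∑ u, jointPmf π' φ' ξ' γ' η' (w, x, cs, ys, u) := h
      _ = ∑ u, (φ' u w * lam u) * n' u x := by
          refine Finset.sum_congr rfl fun u _ => ?_
          simp only [jointPmf, hn', hlam]; ring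
  -- the linear map c ↦ ∑ u, c u • n' u and a left inverse
  obtain ⟨Φm, hΦm⟩ : ∃ Φm : (U → ℝ) →ₗ[ℝ] (X → ℝ), ∀ c, Φm c = ∑ u, c u • n' u := by
    refine ⟨⟨⟨fun c => ∑ u, c u • n' u, ?_⟩, ?_⟩, fun c => rfl⟩
    · intro a b; simp [add_smul, Finset.sum_add_distrib]
    · intro r a; simp [Finset.smul_sum, smul_smul]
  have hker : LinearMap.ker Φm = ⊥ := by
    rw [LinearMap.ker_eq_bot']
    intro c hc
    rw [hΦm] at hc
    exact funext (Fintype.linearIndependent_iff.mp hLIn' c hc)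
  obtain ⟨G, hG⟩ := Φm.exists_leftInverse_of_injective hker
  have hGΦ : ∀ c, G (Φm c) = c := fun c => LinearMap.congr_fun hG c
  -- coefficients of φ' in the φ basis
  set a : U → U → ℝ := fun u v => G (n v) u with ha
  have hGsum : ∀ (c : U → ℝ) (u : U), G (∑ v, c v • n v) u = ∑ v, c v * a u v := by
    intro c u
    rw [map_sum]
    simp only [map_smul, ha]
    simp [Finset.sum_apply]
  -- linear independence of φ, in coordinate form
  have hLIφ : ∀ g : U → ℝ, (∀ w, (∑ v, g v * φ v w) = 0) → ∀ v, g v = 0 := by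
    intro g hg
    refine Fintype.linearIndependent_iff.mp hWli g ?_
    funext w
    simpa [Finset.sum_apply] using hg w
  -- Claim A : φ' u = ∑ v, a u v • φ v
  have hA : ∀ u w, φ' u w = ∑ v, φ v w * a u v := by
    intro u w
    have hfun : (∑ v, φ v w • n v) = Φm (fun u' => φ' u' w) := by
      rw [hΦm]
      funext x
      simp only [Finset.sum_apply, Pi.smul_apply, smul_eq_mul]
      exact hF1 w x
    have h2 : G (∑ v, φ v w • n v) = fun u' => φ' u' w := by rw [hfun]; exact hGΦ _
    have h3 := hGsum (fun v => φ v w) u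
    rw [h2] at h3
    simpa using h3
  -- Claim B : eigen-relation
  have hB : ∀ u w, φ' u w * lam u = ∑ v, (φ v w * mu v) * a u v := by
    intro u w
    have hfun : (∑ v, (φ v w * mu v) • n v) = Φm (fun u' => φ' u' w * lam u') := by
      rw [hΦm]
      funext x
      simp only [Finset.sum_apply, Pi.smul_apply, smul_eq_mul]
      calc ∑ v, φ v w * mu v * n v x = ∑ v, (φ v w * mu v) * n v x := rfl
        _ = ∑ u', (φ' u' w * lam u') * n' u' x := hF2 w x
    have h2 : G (∑ v, (φ v w * mu v) • n v) = fun u' => φ' u' w * lam u' := by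
      rw [hfun]; exact hGΦ _
    have h3 := hGsum (fun v => φ v w * mu v) u
    rw [h2] at h3
    simpa using h3
  have heig : ∀ u v, mu v * a u v = lam u * a u v := by
    intro u v
    have hz : ∀ w, (∑ v', (mu v' * a u v' - lam u * a u v') * φ v' w) = 0 := by
      intro w
      have e1 : (∑ v', (φ v' w * mu v') * a u v') = lam u * ∑ v', φ v' w * a u v' := by
        rw [← hB u w, ← hA u w]; ring
      calc ∑ v', (mu v' * a u v' - lam u * a u v') * φ v' w
          = (∑ v', (φ v' w * mu v') * a u v') - lam u * ∑ v', φ v' w * a u v' := by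
            rw [Finset.mul_sum, ← Finset.sum_sub_distrib]
            exact Finset.sum_congr rfl fun v' _ => by ring
        _ = 0 := by rw [e1, sub_self]
    have h0 := hLIφ _ hz v
    have : mu v * a u v - lam u * a u v = 0 := h0
    linarith
  -- row sums are 1
  have hrow : ∀ u, (∑ v, a u v) = 1 := by
    intro u
    calc ∑ v, a u v = ∑ v, (∑ w, φ v w) * a u v := by
          refine Finset.sum_congr rfl fun v _ => ?_; rw [hφ1 v, one_mul]
      _ = ∑ v, ∑ w, φ v w * a u v := by
          refine Finset.sum_congr rfl fun v _ => ?_; rw [Finset.sum_mul]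
      _ = ∑ w, ∑ v, φ v w * a u v := Finset.sum_comm
      _ = ∑ w, φ' u w := Finset.sum_congr rfl fun w _ => (hA u w).symm
      _ = 1 := hφ1' u
  -- at most one nonzero entry per column
  have hcol : ∀ u1 u2 v, a u1 v ≠ 0 → a u2 v ≠ 0 → u1 = u2 := by
    intro u1 u2 v h1 h2
    have e1 : mu v = lam u1 := mul_right_cancel₀ h1 (heig u1 v)
    have e2 : mu v = lam u2 := mul_right_cancel₀ h2 (heig u2 v)
    exact hinj' (show lam u1 = lam u2 from e1 ▸ e2)
  -- each row has a nonzero entry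
  have hex : ∀ u, ∃ v, a u v ≠ 0 := by
    intro u
    by_contra h
    push_neg at h
    have : (∑ v, a u v) = 0 := Finset.sum_eq_zero fun v _ => h v
    rw [hrow u] at this
    exact one_ne_zero this
  choose σ0 hσ0 using hex
  have hσinj : Function.Injective σ0 := fun u1 u2 h =>
    hcol u1 u2 (σ0 u1) (hσ0 u1) (h ▸ hσ0 u2)
  have hσbij : Function.Bijective σ0 := Finite.injective_iff_bijective.mp hσinj
  set e : U ≃ U := Equiv.ofBijective σ0 hσbij with he
  have hecoe : ∀ u, e u = σ0 u := fun u => rfl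
  -- rows are monomial
  have hmono : ∀ u v, v ≠ σ0 u → a u v = 0 := by
    intro u v hne
    by_contra h
    obtain ⟨u0, hu0⟩ := hσbij.2 v
    have hu : u = u0 := hcol u u0 v h (by rw [← hu0]; exact hσ0 u0)
    exact hne (hu ▸ hu0.symm)
  have hdiag : ∀ u, a u (σ0 u) = 1 := by
    intro u
    have h := hrow u
    rwa [Finset.sum_eq_single (σ0 u) (fun v _ hv => hmono u v hv)
      (fun h' => absurd (Finset.mem_univ _) h')] at h
  have hφeq : ∀ u w, φ' u w = φ (σ0 u) w := by
    intro u w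
    rw [hA u w, Finset.sum_eq_single (σ0 u) (fun v _ hv => by rw [hmono u v hv, mul_zero])
      (fun h' => absurd (Finset.mem_univ _) h'), hdiag, mul_one]
  -- transfer the remaining factors
  have hqq : ∀ x c y u, π' u * ξ' u x * γ' x u c * η' c u y
      = π (σ0 u) * ξ (σ0 u) x * γ x (σ0 u) c * η c (σ0 u) y := by
    intro x c y u
    have hz : ∀ w, (∑ v, ((π v * ξ v x * γ x v c * η c v y)
        - (π' (e.symm v) * ξ' (e.symm v) x * γ' x (e.symm v) c * η' c (e.symm v) y))
          * φ v w) = 0 := by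
      intro w
      have h1 : (∑ v, (π v * ξ v x * γ x v c * η c v y) * φ v w)
          = ∑ v, jointPmf π φ ξ γ η (w, x, c, y, v) := by
        refine Finset.sum_congr rfl fun v _ => ?_
        simp only [jointPmf]; ring
      have h2 : (∑ v, (π' (e.symm v) * ξ' (e.symm v) x * γ' x (e.symm v) c
          * η' c (e.symm v) y) * φ v w)
          = ∑ v, jointPmf π' φ' ξ' γ' η' (w, x, c, y, v) := by
        have := Equiv.sum_comp e.symm
          (fun u' => (π' u' * ξ' u' x * γ' x u' c * η' c u' y) * φ (σ0 u') w)
        calc (∑ v, (π' (e.symm v) * ξ' (e.symm v) x * γ' x (e.symm v) c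
              * η' c (e.symm v) y) * φ v w)
            = ∑ v, (π' (e.symm v) * ξ' (e.symm v) x * γ' x (e.symm v) c
              * η' c (e.symm v) y) * φ (σ0 (e.symm v)) w := by
              refine Finset.sum_congr rfl fun v _ => ?_
              rw [show σ0 (e.symm v) = v from e.apply_symm_apply v]
          _ = ∑ u', (π' u' * ξ' u' x * γ' x u' c * η' c u' y) * φ (σ0 u') w := this
          _ = ∑ u', jointPmf π' φ' ξ' γ' η' (w, x, c, y, u') := by
              refine Finset.sum_congr rfl fun u' _ => ?_
              rw [← hφeq u' w]
              simp only [jointPmf]; ring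
      calc (∑ v, ((π v * ξ v x * γ x v c * η c v y)
            - (π' (e.symm v) * ξ' (e.symm v) x * γ' x (e.symm v) c * η' c (e.symm v) y))
              * φ v w)
          = (∑ v, (π v * ξ v x * γ x v c * η c v y) * φ v w)
            - ∑ v, (π' (e.symm v) * ξ' (e.symm v) x * γ' x (e.symm v) c
              * η' c (e.symm v) y) * φ v w := by
            rw [← Finset.sum_sub_distrib]
            exact Finset.sum_congr rfl fun v _ => by ring
        _ = 0 := by rw [h1, h2, hobs w x c y, sub_self]
    have h0 := hLIφ _ hz (σ0 u)
    have hsy : e.symm (σ0 u) = u := e.symm_apply_apply u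
    rw [hsy] at h0
    linarith
  -- conclusion
  refine ⟨e, fun w x c y u => ?_⟩
  have : jointPmf π' φ' ξ' γ' η' (w, x, c, y, u)
      = φ' u w * (π' u * ξ' u x * γ' x u c * η' c u y) := by
    simp only [jointPmf]; ring
  rw [this, hφeq u w, hqq x c y u, hecoe u]
  simp only [jointPmf]; ring
end

section
/- Let θ = (π, φ, ξ, γ, η) and θ' be latent-subgroup models on nonempty finite types (U, W, X, C, Y), each satisfying the rank/distinctness conditions: (i) the functions w ↦ φ(w|u), u ∈ U, are linearly independent; (ii) there exist c* ∈ C, y* ∈ Y with p_θ(c*,u) > 0 for all u, the functions x ↦ p_θ(x|C=c*,U=u), u ∈ U, linearly independent, and η(y*|c*,u), u ∈ U, pairwise distinct; and (iii) the functions x ↦ p_θ(u|x), u ∈ U, are linearly independent, where p_θ(u|x) = p_θ(x,u)/p_θ(x) and p_θ(x) > 0 for all x (and analogously for θ'). Let r, r' : U → ℝ be nonnegative with ∑_u r(u)·π(u) = 1 and ∑_u r'(u)·π'(u) = 1, and define target pmfs q(w,x,c,y,u) = r(u)·p_θ(w,x,c,y,u) and q'(w,x,c,y,u) = r'(u)·p_θ'(w,x,c,y,u).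 If the observed source marginals agree, ∑_u p_θ(w,x,c,y,u) = ∑_u p_θ'(w,x,c,y,u) for all (w,x,c,y), and the observed target X-marginals agree, q(x) = q'(x) for all x, then the optimal target predictors agree: for every x with q(x) > 0 and every y, q(y|x) = q'(y|x), where q(y|x) = q(x,y)/q(x). -/
set_option linter.unusedSectionVars false
set_option maxHeartbeats 1000000

open Finset


open Finset

lemma rows_surj {U X : Type*} [Fintype U] [Fintype X] [DecidableEq U]
    (G : U → X → ℝ) (hG : LinearIndependent ℝ G) (u0 : U) :
    ∃ c : X → ℝ, ∀ u, ∑ x, G u x * c x = (if u = u0 then (1:ℝ) else 0) := by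
  classical
  set M : Matrix U X ℝ := Matrix.of G with hM
  set E : (U → ℝ) →ₗ[ℝ] (U → ℝ) := M.mulVecLin ∘ₗ M.transpose.mulVecLin with hE
  have hEapp : ∀ v u, E v u = ∑ x, G u x * (∑ u', v u' * G u' x) := by
    intro v u
    simp [hE, Matrix.mulVecLin, Matrix.mulVec, dotProduct, hM, Matrix.transpose,
      mul_comm]
  have hinj : Function.Injective E := by
    intro v v' hvv
    have h0 : E (v - v') = 0 := by simp [map_sub, hvv]
    have hTv : ∀ x, ∑ u', (v - v') u' * G u' x = 0 := by
      have hsq : ∑ x, (∑ u', (v - v') u' * G u' x)^2 = 0 := by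
        have expand : ∑ u, (v - v') u * (E (v - v') u)
            = ∑ x, (∑ u', (v - v') u' * G u' x)^2 := by
          simp only [hEapp]
          calc ∑ u, (v - v') u * ∑ x, G u x * ∑ u', (v - v') u' * G u' x
              = ∑ u, ∑ x, (v - v') u * (G u x * ∑ u', (v - v') u' * G u' x) := by
                apply Finset.sum_congr rfl; intro u _; rw [Finset.mul_sum]
            _ = ∑ x, ∑ u, (v - v') u * (G u x * ∑ u', (v - v') u' * G u' x) :=
                Finset.sum_comm
            _ = ∑ x, (∑ u', (v - v') u' * G u' x)^2 := by
                apply Finset.sum_congr rfl; intro x _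
                rw [sq, Finset.sum_mul]
                apply Finset.sum_congr rfl; intro u _; ring
        rw [← expand]
        simp [h0]
      intro x
      have := (Finset.sum_eq_zero_iff_of_nonneg (fun x _ => sq_nonneg _)).mp hsq x (mem_univ x)
      exact pow_eq_zero_iff (two_ne_zero) |>.mp this
    have hz : ∀ u, (v - v') u = 0 := by
      apply Fintype.linearIndependent_iff.mp hG
      funext x
      simpa using hTv x
    funext u
    have := hz u
    simpa [sub_eq_zero] using this
  have hsurj : Function.Surjective E := LinearMap.injective_iff_surjective.mp hinj
  obtain ⟨v, hv⟩ := hsurj (Pi.single u0 1)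
  refine ⟨fun x => ∑ u', v u' * G u' x, fun u => ?_⟩
  have := congrFun hv u
  rw [hEapp] at this
  rw [this, Pi.single_apply]

lemma spectral {U W X : Type*} [Fintype U] [Fintype W] [Fintype X]
    (f f' : U → W → ℝ) (G G' : U → X → ℝ) (lam lam' : U → ℝ)
    (hf : LinearIndependent ℝ f) (hf' : LinearIndependent ℝ f')
    (hG : LinearIndependent ℝ G)
    (hlam : Function.Injective lam)
    (hA : ∀ w x, ∑ u, f u w * G u x = ∑ u, f' u w * G' u x)
    (hB : ∀ w x, ∑ u, lam u * (f u w * G u x) = ∑ u, lam' u * (f' u w * G' u x))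
    (hsum : ∀ u, ∑ w, f u w = 1) (hsum' : ∀ u, ∑ w, f' u w = 1) :
    ∃ σ : Equiv.Perm U, ∀ u, f' u = f (σ u) := by
  classical
  -- Step A : span f = span f'
  have hspan_le : Submodule.span ℝ (Set.range f) ≤ Submodule.span ℝ (Set.range f') := by
    rw [Submodule.span_le]
    rintro _ ⟨u0, rfl⟩
    obtain ⟨c, hc⟩ := rows_surj G hG u0
    have hrepr : f u0 = ∑ x, c x • ∑ u, G' u x • f' u := by
      funext w
      simp only [Finset.sum_apply, Pi.smul_apply, smul_eq_mul]
      calc f u0 w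
          = ∑ u, (if u = u0 then (1:ℝ) else 0) * f u w := by
            simp [ite_mul]
        _ = ∑ u, (∑ x, G u x * c x) * f u w := by
            apply Finset.sum_congr rfl; intro u _; rw [hc]
        _ = ∑ u, ∑ x, G u x * c x * f u w := by
            apply Finset.sum_congr rfl; intro u _; rw [Finset.sum_mul]
        _ = ∑ x, ∑ u, G u x * c x * f u w := Finset.sum_comm
        _ = ∑ x, c x * ∑ u, f u w * G u x := by
            apply Finset.sum_congr rfl; intro x _
            rw [Finset.mul_sum]
            apply Finset.sum_congr rfl; intro u _; ring
        _ = ∑ x, c x * ∑ u, f' u w * G' u x := by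
            apply Finset.sum_congr rfl; intro x _; rw [hA]
        _ = ∑ x, c x * ∑ u, G' u x * f' u w := by
            apply Finset.sum_congr rfl; intro x _
            rw [Finset.mul_sum, Finset.mul_sum]
            apply Finset.sum_congr rfl; intro u _; ring
    rw [SetLike.mem_coe, hrepr]
    exact Submodule.sum_mem _ fun x _ => Submodule.smul_mem _ _
      (Submodule.sum_mem _ fun u _ => Submodule.smul_mem _ _
        (Submodule.subset_span (Set.mem_range_self _)))
  have hspan : Submodule.span ℝ (Set.range f) = Submodule.span ℝ (Set.range f') := by
    apply Submodule.eq_of_le_of_finrank_le hspan_le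
    rw [finrank_span_eq_card hf, finrank_span_eq_card hf']
  -- Step B : coefficients M
  have hMex : ∀ u, ∃ m : U → ℝ, ∑ v, m v • f v = f' u := by
    intro u
    have : f' u ∈ Submodule.span ℝ (Set.range f) := by
      rw [hspan]; exact Submodule.subset_span (Set.mem_range_self _)
    exact (Submodule.mem_span_range_iff_exists_fun ℝ).mp this
  choose M hM using hMex
  have hMw : ∀ u w, f' u w = ∑ v, M u v * f v w := by
    intro u w
    have := congrFun (hM u) w
    simpa using this.symm
  -- Step C : G v x = ∑ u, M u v * G' u x
  have hGeq : ∀ v x, G v x = ∑ u, M u v * G' u x := by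
    intro v x
    have key : ∀ v, G v x - (∑ u, M u v * G' u x) = 0 := by
      apply Fintype.linearIndependent_iff.mp hf
      funext w
      simp only [Finset.sum_apply, Pi.smul_apply, smul_eq_mul, Pi.zero_apply]
      have hsplit : ∑ v, (G v x - ∑ u, M u v * G' u x) * f v w
          = (∑ v, G v x * f v w) - ∑ v, (∑ u, M u v * G' u x) * f v w := by
        rw [← Finset.sum_sub_distrib]
        apply Finset.sum_congr rfl; intro v _; ring
      rw [hsplit, sub_eq_zero]
      calc ∑ v, G v x * f v w
          = ∑ v, f v w * G v x := by
            apply Finset.sum_congr rfl; intro v _; ring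
        _ = ∑ u, f' u w * G' u x := hA w x
        _ = ∑ u, (∑ v, M u v * f v w) * G' u x := by
            apply Finset.sum_congr rfl; intro u _; rw [← hMw]
        _ = ∑ u, ∑ v, M u v * f v w * G' u x := by
            apply Finset.sum_congr rfl; intro u _; rw [Finset.sum_mul]
        _ = ∑ v, ∑ u, M u v * f v w * G' u x := Finset.sum_comm
        _ = ∑ v, (∑ u, M u v * G' u x) * f v w := by
            apply Finset.sum_congr rfl; intro v _
            rw [Finset.sum_mul]
            apply Finset.sum_congr rfl; intro u _; ring
    have := key v
    linarith
  -- Step D : lam v * G v x = ∑ u, M u v * (lam' u * G' u x)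
  have hDeq : ∀ v x, lam v * G v x = ∑ u, M u v * (lam' u * G' u x) := by
    intro v x
    have key : ∀ v, lam v * G v x - (∑ u, M u v * (lam' u * G' u x)) = 0 := by
      apply Fintype.linearIndependent_iff.mp hf
      funext w
      simp only [Finset.sum_apply, Pi.smul_apply, smul_eq_mul, Pi.zero_apply]
      have hsplit : ∑ v, (lam v * G v x - ∑ u, M u v * (lam' u * G' u x)) * f v w
          = (∑ v, lam v * (f v w * G v x)) - ∑ v, (∑ u, M u v * (lam' u * G' u x)) * f v w := by
        rw [← Finset.sum_sub_distrib]
        apply Finset.sum_congr rfl; intro v _; ring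
      rw [hsplit, sub_eq_zero, hB]
      calc ∑ u, lam' u * (f' u w * G' u x)
          = ∑ u, lam' u * ((∑ v, M u v * f v w) * G' u x) := by
            apply Finset.sum_congr rfl; intro u _; rw [← hMw]
        _ = ∑ u, ∑ v, M u v * (lam' u * G' u x) * f v w := by
            apply Finset.sum_congr rfl; intro u _
            rw [Finset.sum_mul, Finset.mul_sum]
            apply Finset.sum_congr rfl; intro v _; ring
        _ = ∑ v, ∑ u, M u v * (lam' u * G' u x) * f v w := Finset.sum_comm
        _ = ∑ v, (∑ u, M u v * (lam' u * G' u x)) * f v w := by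
            apply Finset.sum_congr rfl; intro v _; rw [Finset.sum_mul]
    have := key v
    linarith
  -- Step : rows of G' are linearly independent
  have hG' : LinearIndependent ℝ G' := by
    rw [linearIndependent_iff_card_eq_finrank_span]
    have hle : Submodule.span ℝ (Set.range G) ≤ Submodule.span ℝ (Set.range G') := by
      rw [Submodule.span_le]
      rintro _ ⟨v, rfl⟩
      have : G v = ∑ u, M u v • G' u := by
        funext x
        simp only [Finset.sum_apply, Pi.smul_apply, smul_eq_mul]
        exact hGeq v x
      rw [SetLike.mem_coe, this]
      exact Submodule.sum_mem _ fun u _ => Submodule.smul_mem _ _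
        (Submodule.subset_span (Set.mem_range_self _))
    have h1 : Fintype.card U ≤ Set.finrank ℝ (Set.range G') := by
      have := Submodule.finrank_mono hle
      rw [finrank_span_eq_card hG] at this
      exact this
    have h2 : Set.finrank ℝ (Set.range G') ≤ Fintype.card U := by
      apply le_trans (finrank_span_le_card _)
      simp [Set.toFinset_range]
      exact Finset.card_image_le
    omega
  -- Step E : (lam v - lam' u) * M u v = 0
  have hlamM : ∀ u v, (lam v - lam' u) * M u v = 0 := by
    intro u v
    have key : ∀ u, (lam v - lam' u) * M u v = 0 := by
      apply Fintype.linearIndependent_iff.mp hG'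
      funext x
      simp only [Finset.sum_apply, Pi.smul_apply, smul_eq_mul, Pi.zero_apply]
      have : ∑ u, (lam v - lam' u) * M u v * G' u x
          = lam v * (∑ u, M u v * G' u x) - ∑ u, M u v * (lam' u * G' u x) := by
        rw [Finset.mul_sum, ← Finset.sum_sub_distrib]
        apply Finset.sum_congr rfl; intro u _; ring
      rw [this, ← hGeq, hDeq, sub_self]
    exact key u
  -- Step F : define σ
  have hex : ∀ u, ∃ v, M u v ≠ 0 := by
    intro u
    by_contra h
    push_neg at h
    have : f' u = 0 := by
      funext w
      rw [hMw]
      simp [h]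
    exact hf'.ne_zero u this
  have huniq : ∀ u v1 v2, M u v1 ≠ 0 → M u v2 ≠ 0 → v1 = v2 := by
    intro u v1 v2 h1 h2
    have e1 : lam v1 = lam' u := by
      have := hlamM u v1
      rcases mul_eq_zero.mp this with h | h
      · linarith [sub_eq_zero.mp h]
      · exact absurd h h1
    have e2 : lam v2 = lam' u := by
      have := hlamM u v2
      rcases mul_eq_zero.mp this with h | h
      · linarith [sub_eq_zero.mp h]
      · exact absurd h h2
    exact hlam (e1.trans e2.symm)
  choose σ hσ using hex
  have hcollapse : ∀ u, f' u = M u (σ u) • f (σ u) := by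
    intro u
    funext w
    rw [hMw]
    simp only [Pi.smul_apply, smul_eq_mul]
    rw [Finset.sum_eq_single (σ u)]
    · intro v _ hv
      have : M u v = 0 := by
        by_contra h
        exact hv (huniq u v (σ u) h (hσ u))
      rw [this, zero_mul]
    · intro h; exact absurd (mem_univ _) h
  have hσinj : Function.Injective σ := by
    intro u1 u2 h12
    by_contra hne
    set v := σ u1
    have h2v : σ u2 = v := h12.symm
    have key : ∀ g : U → ℝ, (∑ u, g u • f' u = 0) → ∀ u, g u = 0 :=
      Fintype.linearIndependent_iff.mp hf'
    set g : U → ℝ := fun u => if u = u1 then M u2 (σ u2) else if u = u2 then -(M u1 v) else 0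
      with hg
    have hzero : ∑ u, g u • f' u = 0 := by
      funext w
      simp only [Finset.sum_apply, Pi.smul_apply, smul_eq_mul, Pi.zero_apply]
      have : ∀ u, g u * f' u w =
          (if u = u1 then M u2 (σ u2) * f' u1 w else 0) +
          (if u = u2 then -(M u1 v) * f' u2 w else 0) := by
        intro u
        by_cases h1 : u = u1
        · subst h1
          simp [hg, hne]
        · by_cases h2 : u = u2
          · subst h2
            simp [hg, h1]
          · simp [hg, h1, h2]
      rw [Finset.sum_congr rfl (fun u _ => this u)]
      rw [Finset.sum_add_distrib]
      simp only [Finset.sum_ite_eq', mem_univ, if_true]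
      have e1 := congrFun (hcollapse u1) w
      have e2 := congrFun (hcollapse u2) w
      simp only [Pi.smul_apply, smul_eq_mul] at e1 e2
      rw [e1, e2, h2v]
      ring
    have := key g hzero u1
    rw [hg] at this
    simp only [if_pos rfl] at this
    exact (hσ u2) this
  have hMone : ∀ u, M u (σ u) = 1 := by
    intro u
    have h1 : ∑ w, f' u w = M u (σ u) * ∑ w, f (σ u) w := by
      rw [Finset.mul_sum]
      apply Finset.sum_congr rfl; intro w _
      have := congrFun (hcollapse u) w
      simpa using this
    rw [hsum' u, hsum (σ u), mul_one] at h1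
    exact h1.symm
  have hbij : Function.Bijective σ := Finite.injective_iff_bijective.mp hσinj
  refine ⟨Equiv.ofBijective σ hbij, fun u => ?_⟩
  have := hcollapse u
  rw [hMone u, one_smul] at this
  exact this


section Marg
variable {U W X C Y : Type*} [Fintype U] [Fintype W] [Fintype X] [Fintype C] [Fintype Y]
    (π : U → ℝ) (φ : U → W → ℝ) (ξ : U → X → ℝ)
    (γ : X → U → C → ℝ) (η : C → U → Y → ℝ)

lemma margY (hη1 : ∀ c u, ∑ y, η c u y = 1) (w : W) (x : X) (c : C) (u : U) :
    ∑ y, jointPmf π φ ξ γ η (w, x, c, y, u) = π u * φ u w * ξ u x * γ x u c := by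
  simp only [jointPmf]
  rw [← Finset.mul_sum, hη1, mul_one]

lemma margWY (hφ1 : ∀ u, ∑ w, φ u w = 1) (hη1 : ∀ c u, ∑ y, η c u y = 1)
    (x : X) (c : C) (u : U) :
    ∑ w, ∑ y, jointPmf π φ ξ γ η (w, x, c, y, u) = π u * ξ u x * γ x u c := by
  have : ∀ w, ∑ y, jointPmf π φ ξ γ η (w, x, c, y, u)
      = φ u w * (π u * ξ u x * γ x u c) := by
    intro w; rw [margY π φ ξ γ η hη1]; ring
  rw [Finset.sum_congr rfl fun w _ => this w, ← Finset.sum_mul, hφ1, one_mul]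

lemma margCY (hγ1 : ∀ x u, ∑ c, γ x u c = 1) (hη1 : ∀ c u, ∑ y, η c u y = 1)
    (w : W) (x : X) (u : U) :
    ∑ c, ∑ y, jointPmf π φ ξ γ η (w, x, c, y, u) = π u * φ u w * ξ u x := by
  have : ∀ c, ∑ y, jointPmf π φ ξ γ η (w, x, c, y, u)
      = (π u * φ u w * ξ u x) * γ x u c := by
    intro c; rw [margY π φ ξ γ η hη1]
  rw [Finset.sum_congr rfl fun c _ => this c, ← Finset.mul_sum, hγ1, mul_one]

lemma margWCY (hφ1 : ∀ u, ∑ w, φ u w = 1) (hγ1 : ∀ x u, ∑ c, γ x u c = 1)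
    (hη1 : ∀ c u, ∑ y, η c u y = 1) (x : X) (u : U) :
    ∑ w, ∑ c, ∑ y, jointPmf π φ ξ γ η (w, x, c, y, u) = π u * ξ u x := by
  have : ∀ w, ∑ c, ∑ y, jointPmf π φ ξ γ η (w, x, c, y, u)
      = φ u w * (π u * ξ u x) := by
    intro w; rw [margCY π φ ξ γ η hγ1 hη1]; ring
  rw [Finset.sum_congr rfl fun w _ => this w, ← Finset.sum_mul, hφ1, one_mul]

lemma margCY' (hγ1 : ∀ x u, ∑ c, γ x u c = 1) (hη1 : ∀ c u, ∑ y, η c u y = 1)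
    (x : X) (u : U) :
    ∑ c, ∑ y, (π u * ξ u x * γ x u c * η c u y) = π u * ξ u x := by
  have h1 : ∀ c, ∑ y, π u * ξ u x * γ x u c * η c u y
      = (π u * ξ u x) * γ x u c := by
    intro c
    rw [← Finset.mul_sum, hη1, mul_one]
  rw [Finset.sum_congr rfl fun c _ => h1 c, ← Finset.mul_sum, hγ1, mul_one]

end Marg

section SumComm
variable {A B C D E : Type*} [Fintype A] [Fintype B] [Fintype C] [Fintype D] [Fintype E]

lemma sum3_pull (F : A → B → C → ℝ) :
    ∑ a, ∑ b, ∑ c, F a b c = ∑ c, ∑ a, ∑ b, F a b c := by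
  have h : ∀ a, ∑ b, ∑ c, F a b c = ∑ c, ∑ b, F a b c := fun a => Finset.sum_comm
  rw [Finset.sum_congr rfl fun a _ => h a, Finset.sum_comm]

lemma sum4_pull (F : A → B → C → D → ℝ) :
    ∑ a, ∑ b, ∑ c, ∑ d, F a b c d = ∑ d, ∑ a, ∑ b, ∑ c, F a b c d := by
  have h1 : ∀ a, ∑ b, ∑ c, ∑ d, F a b c d = ∑ d, ∑ b, ∑ c, F a b c d := by
    intro a; exact sum3_pull (fun b c d => F a b c d)
  rw [Finset.sum_congr rfl fun a _ => h1 a, Finset.sum_comm]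

end SumComm


/-- **The paper's Theorem 1:** under latent subgroup shift and Assumptions A1–A4, the
target conditional `q(Y|X)` is identified from the source observables `(W,X,C,Y)` and the
target marginal of `X`. -/
theorem stmt_17 {U W X C Y : Type*}
    [Fintype U] [Fintype W] [Fintype X] [Fintype C] [Fintype Y]
    [Nonempty U] [Nonempty W] [Nonempty X] [Nonempty C] [Nonempty Y]
    -- model θ
    (π : U → ℝ) (φ : U → W → ℝ) (ξ : U → X → ℝ)
    (γ : X → U → C → ℝ) (η : C → U → Y → ℝ)
    (hπ0 : ∀ u, 0 < π u) (hπ1 : ∑ u, π u = 1)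
    (hφ0 : ∀ u w, 0 ≤ φ u w) (hφ1 : ∀ u, ∑ w, φ u w = 1)
    (hξ0 : ∀ u x, 0 ≤ ξ u x) (hξ1 : ∀ u, ∑ x, ξ u x = 1)
    (hγ0 : ∀ x u c, 0 ≤ γ x u c) (hγ1 : ∀ x u, ∑ c, γ x u c = 1)
    (hη0 : ∀ c u y, 0 ≤ η c u y) (hη1 : ∀ c u, ∑ y, η c u y = 1)
    -- model θ'
    (π' : U → ℝ) (φ' : U → W → ℝ) (ξ' : U → X → ℝ)
    (γ' : X → U → C → ℝ) (η' : C → U → Y → ℝ)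
    (hπ0' : ∀ u, 0 < π' u) (hπ1' : ∑ u, π' u = 1)
    (hφ0' : ∀ u w, 0 ≤ φ' u w) (hφ1' : ∀ u, ∑ w, φ' u w = 1)
    (hξ0' : ∀ u x, 0 ≤ ξ' u x) (hξ1' : ∀ u, ∑ x, ξ' u x = 1)
    (hγ0' : ∀ x u c, 0 ≤ γ' x u c) (hγ1' : ∀ x u, ∑ c, γ' x u c = 1)
    (hη0' : ∀ c u y, 0 ≤ η' c u y) (hη1' : ∀ c u, ∑ y, η' c u y = 1)
    -- (i) linear independence of proxy conditionals
    (hWli : LinearIndependent ℝ φ)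
    (hWli' : LinearIndependent ℝ φ')
    -- (ii) existence of c*, y* with the rank/distinctness conditions
    (hcy : ∃ (cs : C) (ys : Y),
      (∀ u, 0 < ∑ w, ∑ x, ∑ y, jointPmf π φ ξ γ η (w, x, cs, y, u)) ∧
      LinearIndependent ℝ (fun u => fun x =>
        (∑ w, ∑ y, jointPmf π φ ξ γ η (w, x, cs, y, u)) /
          (∑ w, ∑ x', ∑ y, jointPmf π φ ξ γ η (w, x', cs, y, u))) ∧
      Function.Injective (fun u => η cs u ys))
    (hcy' : ∃ (cs : C) (ys : Y),
      (∀ u, 0 < ∑ w, ∑ x, ∑ y, jointPmf π' φ' ξ' γ' η' (w, x, cs, y, u)) ∧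
      LinearIndependent ℝ (fun u => fun x =>
        (∑ w, ∑ y, jointPmf π' φ' ξ' γ' η' (w, x, cs, y, u)) /
          (∑ w, ∑ x', ∑ y, jointPmf π' φ' ξ' γ' η' (w, x', cs, y, u))) ∧
      Function.Injective (fun u => η' cs u ys))
    -- (iii) positivity of p(x) and linear independence of x ↦ p(u|x)
    (hpx : ∀ x, 0 < ∑ w, ∑ c, ∑ y, ∑ u, jointPmf π φ ξ γ η (w, x, c, y, u))
    (hpx' : ∀ x, 0 < ∑ w, ∑ c, ∑ y, ∑ u, jointPmf π' φ' ξ' γ' η' (w, x, c, y, u))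
    (hXli : LinearIndependent ℝ (fun u => fun x =>
      (∑ w, ∑ c, ∑ y, jointPmf π φ ξ γ η (w, x, c, y, u)) /
        (∑ w, ∑ c, ∑ y, ∑ u', jointPmf π φ ξ γ η (w, x, c, y, u'))))
    (hXli' : LinearIndependent ℝ (fun u => fun x =>
      (∑ w, ∑ c, ∑ y, jointPmf π' φ' ξ' γ' η' (w, x, c, y, u)) /
        (∑ w, ∑ c, ∑ y, ∑ u', jointPmf π' φ' ξ' γ' η' (w, x, c, y, u'))))
    -- latent shifts
    (r r' : U → ℝ) (hr0 : ∀ u, 0 ≤ r u) (hr0' : ∀ u, 0 ≤ r' u)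
    (hr1 : ∑ u, r u * π u = 1) (hr1' : ∑ u, r' u * π' u = 1)
    (q q' : W × X × C × Y × U → ℝ)
    (hq : ∀ w x c y u, q (w, x, c, y, u) = r u * jointPmf π φ ξ γ η (w, x, c, y, u))
    (hq' : ∀ w x c y u, q' (w, x, c, y, u) = r' u * jointPmf π' φ' ξ' γ' η' (w, x, c, y, u))
    -- observed source marginals agree
    (hobs : ∀ w x c y,
      (∑ u, jointPmf π φ ξ γ η (w, x, c, y, u)) =
        ∑ u, jointPmf π' φ' ξ' γ' η' (w, x, c, y, u))
    -- observed target X-marginals agree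
    (htgt : ∀ x,
      (∑ w, ∑ c, ∑ y, ∑ u, q (w, x, c, y, u)) =
        ∑ w, ∑ c, ∑ y, ∑ u, q' (w, x, c, y, u)) :
    ∀ x, 0 < (∑ w, ∑ c, ∑ y, ∑ u, q (w, x, c, y, u)) → ∀ y,
      (∑ w, ∑ c, ∑ u, q (w, x, c, y, u)) / (∑ w, ∑ c, ∑ y', ∑ u, q (w, x, c, y', u)) =
        (∑ w, ∑ c, ∑ u, q' (w, x, c, y, u)) /
          (∑ w, ∑ c, ∑ y', ∑ u, q' (w, x, c, y', u)) := by
  classical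
  obtain ⟨cs, ys, hpos, hli, hinjη⟩ := hcy
  set Gm : U → X → ℝ := fun u x => π u * ξ u x * γ x u cs with hGm
  set Gm' : U → X → ℝ := fun u x => π' u * ξ' u x * γ' x u cs with hGm'
  have hmWY : ∀ x u, ∑ w, ∑ y, jointPmf π φ ξ γ η (w, x, cs, y, u) = Gm u x := by
    intro x u; rw [margWY π φ ξ γ η hφ1 hη1 x cs u, hGm]
  have hmWY' : ∀ x u, ∑ w, ∑ y, jointPmf π' φ' ξ' γ' η' (w, x, cs, y, u) = Gm' u x := by
    intro x u; rw [margWY π' φ' ξ' γ' η' hφ1' hη1' x cs u, hGm']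
  have hρpos : ∀ u, 0 < ∑ x, Gm u x := by
    intro u
    have h := hpos u
    have e : ∑ w, ∑ x, ∑ y, jointPmf π φ ξ γ η (w, x, cs, y, u) = ∑ x, Gm u x := by
      rw [Finset.sum_comm]
      exact Finset.sum_congr rfl fun x _ => hmWY x u
    rwa [e] at h
  have hGli : LinearIndependent ℝ Gm := by
    have hfam : (fun u => fun x =>
        (∑ w, ∑ y, jointPmf π φ ξ γ η (w, x, cs, y, u)) /
          (∑ w, ∑ x', ∑ y, jointPmf π φ ξ γ η (w, x', cs, y, u)))
        = fun u => fun x => Gm u x / (∑ x', Gm u x') := by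
      funext u x
      rw [hmWY x u]
      congr 1
      rw [Finset.sum_comm]
      exact Finset.sum_congr rfl fun x' _ => hmWY x' u
    rw [hfam] at hli
    rw [Fintype.linearIndependent_iff]
    intro cvec hc0 u
    have h2 := Fintype.linearIndependent_iff.mp hli (fun u => cvec u * (∑ x', Gm u x'))
    have h3 : ∑ u, (cvec u * ∑ x', Gm u x') • (fun x => Gm u x / (∑ x', Gm u x')) = 0 := by
      funext x
      have hx := congrFun hc0 x
      simp only [Finset.sum_apply, Pi.smul_apply, smul_eq_mul, Pi.zero_apply] at hx ⊢
      refine Eq.trans (Finset.sum_congr rfl fun u _ => ?_) hx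
      have hρ : (∑ x', Gm u x') ≠ 0 := (hρpos u).ne'
      field_simp
    have h4 := h2 h3 u
    have hρ : (∑ x', Gm u x') ≠ 0 := (hρpos u).ne'
    exact (mul_eq_zero.mp h4).resolve_right hρ
  have hA : ∀ w x, ∑ u, φ u w * Gm u x = ∑ u, φ' u w * Gm' u x := by
    intro w x
    have e1 : ∑ y, ∑ u, jointPmf π φ ξ γ η (w, x, cs, y, u) = ∑ u, φ u w * Gm u x := by
      rw [Finset.sum_comm]
      apply Finset.sum_congr rfl; intro u _
      rw [margY π φ ξ γ η hη1 w x cs u, hGm]; ring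
    have e1' : ∑ y, ∑ u, jointPmf π' φ' ξ' γ' η' (w, x, cs, y, u)
        = ∑ u, φ' u w * Gm' u x := by
      rw [Finset.sum_comm]
      apply Finset.sum_congr rfl; intro u _
      rw [margY π' φ' ξ' γ' η' hη1' w x cs u, hGm']; ring
    rw [← e1, ← e1']
    exact Finset.sum_congr rfl fun y _ => hobs w x cs y
  have hB : ∀ w x, ∑ u, (η cs u ys) * (φ u w * Gm u x)
      = ∑ u, (η' cs u ys) * (φ' u w * Gm' u x) := by
    intro w x
    have e1 : ∀ u, (η cs u ys) * (φ u w * Gm u x)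
        = jointPmf π φ ξ γ η (w, x, cs, ys, u) := by
      intro u; simp only [hGm, jointPmf]; ring
    have e1' : ∀ u, (η' cs u ys) * (φ' u w * Gm' u x)
        = jointPmf π' φ' ξ' γ' η' (w, x, cs, ys, u) := by
      intro u; simp only [hGm', jointPmf]; ring
    rw [Finset.sum_congr rfl fun u _ => e1 u, Finset.sum_congr rfl fun u _ => e1' u]
    exact hobs w x cs ys
  obtain ⟨σ, hσf⟩ := spectral φ φ' Gm Gm' (fun u => η cs u ys) (fun u => η' cs u ys)
    hWli hWli' hGli hinjη hA hB hφ1 hφ1'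
  -- matching of the remaining factors
  have hg : ∀ u x c y, π' u * ξ' u x * γ' x u c * η' c u y
      = π (σ u) * ξ (σ u) x * γ x (σ u) c * η c (σ u) y := by
    intro u x c y
    set a : U → ℝ := fun v => π v * ξ v x * γ x v c * η c v y with ha
    set a' : U → ℝ := fun v => π' v * ξ' v x * γ' x v c * η' c v y with ha'
    have key : ∀ v, a v - a' (σ.symm v) = 0 := by
      apply Fintype.linearIndependent_iff.mp hWli
      funext w
      simp only [Finset.sum_apply, Pi.smul_apply, smul_eq_mul, Pi.zero_apply]
      have h1 : ∑ v, (a v - a' (σ.symm v)) * φ v w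
          = (∑ v, φ v w * a v) - ∑ v, φ v w * a' (σ.symm v) := by
        rw [← Finset.sum_sub_distrib]
        apply Finset.sum_congr rfl; intro v _; ring
      rw [h1, sub_eq_zero]
      have h2 : ∑ v, φ v w * a v = ∑ u', jointPmf π φ ξ γ η (w, x, c, y, u') := by
        apply Finset.sum_congr rfl; intro v _
        simp only [ha, jointPmf]; ring
      have h3 : ∑ v, φ v w * a' (σ.symm v)
          = ∑ u', jointPmf π' φ' ξ' γ' η' (w, x, c, y, u') := by
        calc ∑ v, φ v w * a' (σ.symm v)
            = ∑ u', φ (σ u') w * a' (σ.symm (σ u')) := by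
              rw [Equiv.sum_comp σ (fun v => φ v w * a' (σ.symm v))]
          _ = ∑ u', jointPmf π' φ' ξ' γ' η' (w, x, c, y, u') := by
              apply Finset.sum_congr rfl; intro u' _
              rw [Equiv.symm_apply_apply]
              simp only [ha', jointPmf]
              rw [congrFun (hσf u') w]
              ring
      rw [h2, h3, hobs]
    have hk := key (σ u)
    rw [Equiv.symm_apply_apply] at hk
    simp only [ha, ha'] at hk
    linarith
  have hπξ : ∀ u x, π' u * ξ' u x = π (σ u) * ξ (σ u) x := by
    intro u x
    have h1 := margCY' π' ξ' γ' η' hγ1' hη1' x u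
    have h2 := margCY' π ξ γ η hγ1 hη1 x (σ u)
    rw [← h1, ← h2]
    apply Finset.sum_congr rfl; intro c _
    apply Finset.sum_congr rfl; intro y _
    exact hg u x c y
  have hppos : ∀ x, 0 < ∑ u, π u * ξ u x := by
    intro x
    have h := hpx x
    have e : ∑ w, ∑ c, ∑ y, ∑ u, jointPmf π φ ξ γ η (w, x, c, y, u)
        = ∑ u, π u * ξ u x := by
      rw [sum4_pull]
      exact Finset.sum_congr rfl fun u _ => margWCY π φ ξ γ η hφ1 hγ1 hη1 x u
    rwa [e] at h
  have hXfam : (fun u => fun x =>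
      (∑ w, ∑ c, ∑ y, jointPmf π φ ξ γ η (w, x, c, y, u)) /
        (∑ w, ∑ c, ∑ y, ∑ u', jointPmf π φ ξ γ η (w, x, c, y, u')))
      = fun u => fun x => (π u * ξ u x) / (∑ u', π u' * ξ u' x) := by
    funext u x
    rw [margWCY π φ ξ γ η hφ1 hγ1 hη1 x u]
    congr 1
    rw [sum4_pull]
    exact Finset.sum_congr rfl fun u' _ => margWCY π φ ξ γ η hφ1 hγ1 hη1 x u'
  rw [hXfam] at hXli
  have hqx : ∀ x, ∑ w, ∑ c, ∑ y, ∑ u, q (w, x, c, y, u)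
      = ∑ u, r u * (π u * ξ u x) := by
    intro x
    rw [sum4_pull]
    apply Finset.sum_congr rfl; intro u _
    calc ∑ w, ∑ c, ∑ y, q (w, x, c, y, u)
        = r u * ∑ w, ∑ c, ∑ y, jointPmf π φ ξ γ η (w, x, c, y, u) := by
          simp only [hq, ← Finset.mul_sum]
      _ = r u * (π u * ξ u x) := by rw [margWCY π φ ξ γ η hφ1 hγ1 hη1 x u]
  have hqx' : ∀ x, ∑ w, ∑ c, ∑ y, ∑ u, q' (w, x, c, y, u)
      = ∑ u, r' u * (π' u * ξ' u x) := by
    intro x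
    rw [sum4_pull]
    apply Finset.sum_congr rfl; intro u _
    calc ∑ w, ∑ c, ∑ y, q' (w, x, c, y, u)
        = r' u * ∑ w, ∑ c, ∑ y, jointPmf π' φ' ξ' γ' η' (w, x, c, y, u) := by
          simp only [hq', ← Finset.mul_sum]
      _ = r' u * (π' u * ξ' u x) := by rw [margWCY π' φ' ξ' γ' η' hφ1' hγ1' hη1' x u]
  have hr'σ : ∀ u, r' u = r (σ u) := by
    have key : ∀ v, r v - r' (σ.symm v) = 0 := by
      apply Fintype.linearIndependent_iff.mp hXli
      funext x
      simp only [Finset.sum_apply, Pi.smul_apply, smul_eq_mul, Pi.zero_apply]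
      have hnum : ∑ v, r v * (π v * ξ v x) - ∑ v, r' (σ.symm v) * (π v * ξ v x) = 0 := by
        have e2 : ∑ v, r' (σ.symm v) * (π v * ξ v x)
            = ∑ u, r' u * (π' u * ξ' u x) := by
          rw [← Equiv.sum_comp σ (fun v => r' (σ.symm v) * (π v * ξ v x))]
          apply Finset.sum_congr rfl; intro u _
          rw [Equiv.symm_apply_apply, hπξ u x]
        rw [e2, ← hqx x, ← hqx' x, htgt x, sub_self]
      calc ∑ v, (r v - r' (σ.symm v)) * ((π v * ξ v x) / (∑ u', π u' * ξ u' x))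
          = (∑ v, (r v - r' (σ.symm v)) * (π v * ξ v x)) / (∑ u', π u' * ξ u' x) := by
            rw [Finset.sum_div]
            apply Finset.sum_congr rfl; intro v _; ring
        _ = 0 := by
            have : ∑ v, (r v - r' (σ.symm v)) * (π v * ξ v x)
                = ∑ v, r v * (π v * ξ v x) - ∑ v, r' (σ.symm v) * (π v * ξ v x) := by
              rw [← Finset.sum_sub_distrib]
              apply Finset.sum_congr rfl; intro v _; ring
            rw [this, hnum, zero_div]
    intro u
    have hk := key (σ u)
    rw [Equiv.symm_apply_apply] at hk
    linarith
  have hqq : ∀ w x c y u, q' (w, x, c, y, u) = q (w, x, c, y, σ u) := by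
    intro w x c y u
    rw [hq' w x c y u, hq w x c y (σ u), hr'σ u]
    congr 1
    simp only [jointPmf]
    calc π' u * φ' u w * ξ' u x * γ' x u c * η' c u y
        = φ' u w * (π' u * ξ' u x * γ' x u c * η' c u y) := by ring
      _ = φ (σ u) w * (π (σ u) * ξ (σ u) x * γ x (σ u) c * η c (σ u) y) := by
          rw [congrFun (hσf u) w, hg u x c y]
      _ = π (σ u) * φ (σ u) w * ξ (σ u) x * γ x (σ u) c * η c (σ u) y := by ring
  have hsum_u : ∀ w x c y, ∑ u, q' (w, x, c, y, u) = ∑ u, q (w, x, c, y, u) := by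
    intro w x c y
    rw [Finset.sum_congr rfl fun u _ => hqq w x c y u]
    exact Equiv.sum_comp σ (fun v => q (w, x, c, y, v))
  intro x hx y
  have e1 : (∑ w, ∑ c, ∑ u, q' (w, x, c, y, u)) = ∑ w, ∑ c, ∑ u, q (w, x, c, y, u) := by
    apply Finset.sum_congr rfl; intro w _
    apply Finset.sum_congr rfl; intro c _
    exact hsum_u w x c y
  have e2 : (∑ w, ∑ c, ∑ y', ∑ u, q' (w, x, c, y', u))
      = ∑ w, ∑ c, ∑ y', ∑ u, q (w, x, c, y', u) := by
    apply Finset.sum_congr rfl; intro w _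
    apply Finset.sum_congr rfl; intro c _
    apply Finset.sum_congr rfl; intro y' _
    exact hsum_u w x c y'
  rw [e1, e2]
end

section
/- Let E be a real inner product space and F a real vector space. Let k be a natural number, φ : Fin k → E a linearly independent family, ψ : Fin k → F a linearly independent family, s : Fin k → ℝ with s i ≠ 0 for all i, and m : Fin k → ℝ. Define linear maps A, B : E → F by A h = ∑_i (s i · ⟪φ i, h⟫) • ψ i and B h = ∑_i (s i · m i · ⟪φ i, h⟫) • ψ i. Then for every λ ∈ ℝ: there exists h ∈ E with A h ≠ 0 and B h = λ • A h, if and only if λ = m i for some i. In other words, the generalized eigenvalues of the pencil (B, A) are exactly the values m i. -/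
/-!
Write `c i := s i * ⟪φ i, h⟫`, so that `A h = ∑ c i • ψ i` and `B h = ∑ (m i * c i) • ψ i`.
By linear independence of `ψ`, `B h = λ • A h` says `(m i - λ) * c i = 0` for every `i`, and
`A h ≠ 0` says some `c i ≠ 0`; so `λ` must be one of the `m i`. Conversely, linear independence
of `φ` puts `φ i` outside the span of the other `φ j`, hence outside `(Kᗮ)ᗮ` for that span `K`,
which yields `h` orthogonal to every `φ j` with `j ≠ i` but not to `φ i`: then `c` is supported
at `i` and `h` is a generalized eigenvector for `m i`.
-/

open scoped RealInnerProductSpace InnerProductSpace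

theorem LinearIndependent.exists_inner_ne_zero_of_inner_eq_zero {𝕜 E ι : Type*} [RCLike 𝕜]
    [NormedAddCommGroup E] [InnerProductSpace 𝕜 E] [Finite ι] {φ : ι → E}
    (hφ : LinearIndependent 𝕜 φ) (i : ι) :
    ∃ h : E, ⟪φ i, h⟫_𝕜 ≠ 0 ∧ ∀ j ≠ i, ⟪φ j, h⟫_𝕜 = 0 := by
  set K := Submodule.span 𝕜 (φ '' {i}ᶜ)
  have : FiniteDimensional 𝕜 K := .span_of_finite 𝕜 ((Set.toFinite _).image φ)
  have hi : φ i ∉ Kᗮᗮ := by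
    rw [K.orthogonal_orthogonal]
    exact hφ.notMem_span_image (by simp)
  obtain ⟨h, hK, hh⟩ : ∃ h ∈ Kᗮ, ⟪h, φ i⟫_𝕜 ≠ 0 := by
    by_contra! H
    exact hi ((Kᗮ.mem_orthogonal _).2 H)
  exact ⟨h, fun h0 => hh (by rw [← inner_conj_symm, h0, map_zero]),
    fun j hj => (K.mem_orthogonal h).1 hK _ (Submodule.subset_span ⟨j, hj, rfl⟩)⟩

section LinearIndependent

variable {R M ι : Type*} [AddCommGroup M] [Fintype ι] {v : ι → M}

theorem LinearIndependent.sum_smul_eq_zero_iff [Ring R] [Module R M]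
    (hv : LinearIndependent R v) (c : ι → R) : ∑ i, c i • v i = 0 ↔ ∀ i, c i = 0 :=
  ⟨Fintype.linearIndependent_iff.1 hv c, fun hc => by simp [hc]⟩

theorem LinearIndependent.sum_mul_smul_eq_smul_sum_iff [CommRing R] [Module R M]
    (hv : LinearIndependent R v) (c μ : ι → R) (lam : R) :
    ∑ i, (μ i * c i) • v i = lam • ∑ i, c i • v i ↔ ∀ i, (μ i - lam) * c i = 0 := by
  rw [Finset.smul_sum, ← sub_eq_zero, ← Finset.sum_sub_distrib]
  simp_rw [smul_smul, ← sub_smul, ← sub_mul]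
  exact hv.sum_smul_eq_zero_iff _

end LinearIndependent

/-- **Spectral identification step in the proof of Theorem 2 (continuous observations):**
for the operators `A h = ∑ i, (s i · ⟪φ i, h⟫) • ψ i` and
`B h = ∑ i, (s i · m i · ⟪φ i, h⟫) • ψ i` built from linearly independent families `φ`, `ψ`,
the generalized eigenvalues of the pencil `(B, A)` are exactly the values `m i`. -/
theorem stmt_18 {E F : Type*} [NormedAddCommGroup E] [InnerProductSpace ℝ E]
    [AddCommGroup F] [Module ℝ F]
    (k : ℕ) (φ : Fin k → E) (hφ : LinearIndependent ℝ φ)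
    (ψ : Fin k → F) (hψ : LinearIndependent ℝ ψ)
    (s : Fin k → ℝ) (hs : ∀ i, s i ≠ 0) (m : Fin k → ℝ)
    (A B : E →ₗ[ℝ] F)
    (hA : ∀ h : E, A h = ∑ i, (s i * ⟪φ i, h⟫) • ψ i)
    (hB : ∀ h : E, B h = ∑ i, (s i * m i * ⟪φ i, h⟫) • ψ i)
    (lam : ℝ) :
    (∃ h : E, A h ≠ 0 ∧ B h = lam • A h) ↔ ∃ i, lam = m i := by
  have hA_ne : ∀ h, A h ≠ 0 ↔ ∃ i, s i * ⟪φ i, h⟫ ≠ 0 := fun h => by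
    rw [hA, Ne, hψ.sum_smul_eq_zero_iff, not_forall]
  have hBA : ∀ h, B h = lam • A h ↔ ∀ i, (m i - lam) * (s i * ⟪φ i, h⟫) = 0 := fun h => by
    rw [hB, hA, ← hψ.sum_mul_smul_eq_smul_sum_iff]
    exact Eq.congr_left (Finset.sum_congr rfl fun i _ => by ring_nf)
  simp_rw [hA_ne, hBA]
  constructor
  · rintro ⟨h, ⟨i, hi⟩, hm⟩
    exact ⟨i, (sub_eq_zero.1 ((mul_eq_zero.1 (hm i)).resolve_right hi)).symm⟩
  · rintro ⟨i, rfl⟩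
    obtain ⟨h, hi, hj⟩ := hφ.exists_inner_ne_zero_of_inner_eq_zero i
    refine ⟨h, ⟨i, mul_ne_zero (hs i) hi⟩, fun j => ?_⟩
    by_cases hji : j = i
    · simp [hji]
    · simp [hj j hji]
end
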